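/- arXiv:2106.14812 — 7 statements merged into one kernel-verified Lean document; each statement's English description precedes it below -/
import Mathlib

section
/- Let E be a measurable space, Λ > 0, λ : E × E → [0, Λ] a bounded measurable symmetric function, and Γ a Markov kernel from E × E to E × E satisfying the symmetry condition that Γ((z₁,z₂),·) is the pushforward of Γ((z₂,z₁),·) under the swap map (w₁,w₂) ↦ (w₂,w₁). For bounded measurable ψ : E² → ℝ define L⁽²⁾ψ(z₁,z₂) := λ(z₁,z₂) ∫_{E²} (ψ(w₁,w₂) − ψ(z₁,z₂)) Γ((z₁,z₂), d(w₁,w₂)). For N ≥ 1 define the N-particle generator 𝓛_N acting on bounded measurable ψ_N : E^N → ℝ by 𝓛_N ψ_N := (1/N) ∑_{1 ≤ i < j ≤ N} L⁽²⁾ ⋄_{ij} ψ_N, and for s ≥ 1 and bounded measurable φ_s : E^s → ℝ define Dφ_s : E^{s+1} → ℝ by Dφ_s(z¹,…,z^{s+1}) := ∑_{i=1}^s (L⁽²⁾ ⋄_{i,s+1} (φ_s ⊗ 1))(z¹,…,z^{s+1}). Let f₀^N be a symmetric (exchangeable) probability measure on E^N and let f₀^{m,N} denote its m-th marginal. Then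 there is a constant C ≥ 0 depending only on Λ (one may take C = 2Λ) such that for all integers s ≥ 1 and k ≥ 1 with s + k ≤ N, and every bounded measurable φ_s : E^s → ℝ, there exists a real number u with |u| ≤ C^k ‖φ_s‖_∞ · ((s+k−2)!/(s−1)!) · ∑_{ℓ=0}^{k−1} (s+ℓ)², such that ∫_{E^N} (𝓛_N^k φ̃_s) df₀^N = u/N + α_N^{(s,k)} ∫_{E^{s+k}} (D^k φ_s) d f₀^{s+k,N}, where φ̃_s : E^N → ℝ is the extension φ̃_s(z¹,…,z^N) := φ_s(z¹,…,z^s) and α_N^{(s,k)} := (N−s)(N−s−1)⋯(N−s−k+1)/N^k. -/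
open MeasureTheory ProbabilityTheory Finset

noncomputable section

variable {E : Type*} [MeasurableSpace E]

/-- The binary collision operator
`L⁽²⁾ψ(z₁,z₂) := λ(z₁,z₂) ∫ (ψ(w₁,w₂) − ψ(z₁,z₂)) Γ((z₁,z₂), dw)`. -/
def L2op (lam : E × E → ℝ) (Γ : Kernel (E × E) (E × E)) (ψ : E × E → ℝ) : E × E → ℝ :=
  fun z => lam z * ∫ w, (ψ w - ψ z) ∂(Γ z)

/-- Slotwise action of a two-particle operator. -/
def slot2 {N : ℕ} (L2 : ((E × E) → ℝ) → ((E × E) → ℝ)) (i j : Fin N)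
    (ψ : (Fin N → E) → ℝ) (z : Fin N → E) : ℝ :=
  L2 (fun p => ψ (Function.update (Function.update z i p.1) j p.2)) (z i, z j)

/-- The `N`-particle Boltzmann generator `𝓛_N ψ = (1/N) ∑_{i<j} L⁽²⁾ ⋄ᵢⱼ ψ`. -/
def kacGen (lam : E × E → ℝ) (Γ : Kernel (E × E) (E × E)) (N : ℕ) :
    ((Fin N → E) → ℝ) → (Fin N → E) → ℝ :=
  fun ψ z => (1 / N : ℝ) * ∑ i : Fin N, ∑ j : Fin N,
    (if i < j then slot2 (L2op lam Γ) i j ψ z else 0)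

/-- The branching operator `Dφ(z¹,…,z^s,z^{s+1}) = ∑ᵢ (L⁽²⁾ ⋄_{i,s+1} (φ ⊗ 1))(z¹,…,z^{s+1})`. -/
def Dop (lam : E × E → ℝ) (Γ : Kernel (E × E) (E × E)) (s : ℕ)
    (φ : (Fin s → E) → ℝ) : (Fin (s + 1) → E) → ℝ :=
  fun z => ∑ i : Fin s,
    L2op lam Γ (fun p => φ (Function.update (fun m : Fin s => z m.castSucc) i p.1))
      (z i.castSucc, z (Fin.last s))

/-- Iterate `D^k`, mapping functions of `s` variables to functions of `s + k` variables. -/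
def Dpow (lam : E × E → ℝ) (Γ : Kernel (E × E) (E × E)) :
    (k : ℕ) → (s : ℕ) → ((Fin s → E) → ℝ) → (Fin (s + k) → E) → ℝ
  | 0, _, φ => φ
  | k + 1, s, φ => Dop lam Γ (s + k) (Dpow lam Γ k s φ)

namespace Kac
variable {Λ : ℝ} {lam : E × E → ℝ} {Γ : Kernel (E × E) (E × E)}

lemma integrable_of_bdd {α : Type*} [MeasurableSpace α] {μ : Measure α} [IsFiniteMeasure μ]
    {g : α → ℝ} (hg : Measurable g) {C : ℝ} (hb : ∀ x, |g x| ≤ C) : Integrable g μ := by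
  refine ⟨hg.aestronglyMeasurable, ?_⟩
  refine HasFiniteIntegral.of_bounded (C := C) ?_
  filter_upwards with x using by simpa [Real.norm_eq_abs] using hb x

lemma measurable_update2 {n : ℕ} (i j : Fin n) :
    Measurable (fun q : (Fin n → E) × (E × E) =>
      Function.update (Function.update q.1 i q.2.1) j q.2.2) := by
  exact measurable_update'.comp
    ((measurable_update'.comp (measurable_fst.prodMk (measurable_fst.comp measurable_snd))).prodMk
      (measurable_snd.comp measurable_snd))

lemma slot2_eq [IsMarkovKernel Γ] {n : ℕ} (i j : Fin n) (ψ : (Fin n → E) → ℝ) (z : Fin n → E) :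
    slot2 (L2op lam Γ) i j ψ z
      = lam (z i, z j) *
        ∫ w, (ψ (Function.update (Function.update z i w.1) j w.2) - ψ z) ∂(Γ (z i, z j)) := by
  simp only [slot2, L2op, Function.update_eq_self]

lemma slot2_meas [IsMarkovKernel Γ] (hlam : Measurable lam) {n : ℕ} (i j : Fin n)
    {ψ : (Fin n → E) → ℝ} (hψ : Measurable ψ) :
    Measurable (slot2 (L2op lam Γ) i j ψ) := by
  have hcoords : Measurable (fun z : Fin n → E => (z i, z j)) :=
    (measurable_pi_apply i).prodMk (measurable_pi_apply j)
  have h1 : Measurable fun z : Fin n → E => lam (z i, z j) := hlam.comp hcoords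
  have hG : Measurable (fun q : (Fin n → E) × (E × E) =>
      ψ (Function.update (Function.update q.1 i q.2.1) j q.2.2) - ψ q.1) :=
    (hψ.comp (measurable_update2 i j)).sub (hψ.comp measurable_fst)
  have h2 : Measurable fun z : Fin n → E =>
      ∫ w, (ψ (Function.update (Function.update z i w.1) j w.2) - ψ z)
        ∂((Γ.comap (fun z : Fin n → E => (z i, z j)) hcoords) z) :=
    (MeasureTheory.StronglyMeasurable.integral_kernel_prod_right'
      hG.stronglyMeasurable).measurable
  have h2' : Measurable fun z : Fin n → E =>
      ∫ w, (ψ (Function.update (Function.update z i w.1) j w.2) - ψ z) ∂(Γ (z i, z j)) := by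
    simpa [Kernel.comap_apply] using h2
  have := h1.mul h2'
  convert this using 1
  funext z
  exact slot2_eq i j ψ z

lemma slot2_bdd [IsMarkovKernel Γ] (hΛ : 0 ≤ Λ) (hln : ∀ z, 0 ≤ lam z) (hll : ∀ z, lam z ≤ Λ)
    {n : ℕ} (i j : Fin n) {ψ : (Fin n → E) → ℝ} {C : ℝ} (hb : ∀ z, |ψ z| ≤ C)
    (z : Fin n → E) : |slot2 (L2op lam Γ) i j ψ z| ≤ 2 * Λ * C := by
  rw [slot2_eq]
  have h1 : |lam (z i, z j)| ≤ Λ := abs_le.2 ⟨by linarith [hln (z i, z j)], hll _⟩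
  have h2 : |∫ w, (ψ (Function.update (Function.update z i w.1) j w.2) - ψ z)
      ∂(Γ (z i, z j))| ≤ 2 * C := by
    rw [← Real.norm_eq_abs]
    calc ‖∫ w, (ψ (Function.update (Function.update z i w.1) j w.2) - ψ z) ∂(Γ (z i, z j))‖
        ≤ 2 * C * ((Γ (z i, z j)) Set.univ).toReal := by
          refine norm_integral_le_of_norm_le_const ?_
          filter_upwards with w
          rw [Real.norm_eq_abs]
          calc |ψ (Function.update (Function.update z i w.1) j w.2) - ψ z|
              ≤ |ψ (Function.update (Function.update z i w.1) j w.2)| + |ψ z| := abs_sub _ _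
            _ ≤ C + C := add_le_add (hb _) (hb _)
            _ = 2 * C := by ring
      _ = 2 * C := by simp
  calc |lam (z i, z j) * ∫ w, (ψ (Function.update (Function.update z i w.1) j w.2) - ψ z)
        ∂(Γ (z i, z j))| = |lam (z i, z j)| * |_| := abs_mul _ _
    _ ≤ Λ * (2 * C) := by
        refine mul_le_mul h1 h2 (abs_nonneg _) hΛ
    _ = 2 * Λ * C := by ring

lemma integrand_meas {n : ℕ} (i j : Fin n) {ψ : (Fin n → E) → ℝ} (hψ : Measurable ψ)
    (z : Fin n → E) :
    Measurable fun w : E × E => ψ (Function.update (Function.update z i w.1) j w.2) :=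
  hψ.comp ((measurable_update2 i j).comp (measurable_const.prodMk measurable_id))

lemma slot2_add [IsMarkovKernel Γ] {n : ℕ} (i j : Fin n) {ψ ψ' : (Fin n → E) → ℝ}
    (hψ : Measurable ψ) (hψ' : Measurable ψ') {C C' : ℝ}
    (hb : ∀ z, |ψ z| ≤ C) (hb' : ∀ z, |ψ' z| ≤ C') (z : Fin n → E) :
    slot2 (L2op lam Γ) i j (fun y => ψ y + ψ' y) z
      = slot2 (L2op lam Γ) i j ψ z + slot2 (L2op lam Γ) i j ψ' z := by
  simp only [slot2_eq]
  rw [← mul_add, ← integral_add]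
  · congr 1
    apply integral_congr_ae
    filter_upwards with w
    ring
  · exact integrable_of_bdd ((integrand_meas i j hψ z).sub measurable_const)
      (C := C + |ψ z|) (fun w => (abs_sub _ _).trans (add_le_add (hb _) le_rfl))
  · exact integrable_of_bdd ((integrand_meas i j hψ' z).sub measurable_const)
      (C := C' + |ψ' z|) (fun w => (abs_sub _ _).trans (add_le_add (hb' _) le_rfl))

lemma slot2_zero [IsMarkovKernel Γ] {n : ℕ} (i j : Fin n) (z : Fin n → E) :
    slot2 (L2op lam Γ) i j (fun _ => (0:ℝ)) z = 0 := by
  simp [slot2_eq]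

def Good {n : ℕ} (ψ : (Fin n → E) → ℝ) : Prop := Measurable ψ ∧ ∃ C : ℝ, (0 ≤ C ∧ ∀ z, |ψ z| ≤ C)

lemma Good.zero {n : ℕ} : Good (E := E) (n := n) (fun _ => 0) :=
  ⟨measurable_const, 0, le_rfl, fun _ => by simp⟩

lemma Good.add {n : ℕ} {ψ ψ' : (Fin n → E) → ℝ} (h : Good ψ) (h' : Good ψ') :
    Good (fun z => ψ z + ψ' z) := by
  obtain ⟨m, C, hC, hb⟩ := h
  obtain ⟨m', C', hC', hb'⟩ := h'
  exact ⟨m.add m', C + C', by linarith, fun z => (abs_add_le _ _).trans (add_le_add (hb z) (hb' z))⟩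

lemma Good.sum {n : ℕ} {ι : Type*} (F : Finset ι) {f : ι → (Fin n → E) → ℝ}
    (h : ∀ x ∈ F, Good (f x)) : Good (fun z => ∑ x ∈ F, f x z) := by
  classical
  induction F using Finset.induction_on with
  | empty => simpa using Good.zero
  | @insert a F' hx ih =>
    simp only [Finset.sum_insert hx]
    exact (h a (Finset.mem_insert_self a F')).add
      (ih fun x hxF => h x (Finset.mem_insert_of_mem hxF))

lemma Good.slot2 [IsMarkovKernel Γ] (hΛ : 0 ≤ Λ) (hlam : Measurable lam)
    (hln : ∀ z, 0 ≤ lam z) (hll : ∀ z, lam z ≤ Λ) {n : ℕ} (i j : Fin n)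
    {ψ : (Fin n → E) → ℝ} (h : Good ψ) : Good (slot2 (L2op lam Γ) i j ψ) := by
  obtain ⟨m, C, hC, hb⟩ := h
  exact ⟨slot2_meas hlam i j m, 2 * Λ * C, by positivity,
    fun z => slot2_bdd hΛ hln hll i j hb z⟩

lemma slot2_sum [IsMarkovKernel Γ] {n : ℕ} (i j : Fin n) {ι : Type*} (F : Finset ι)
    {f : ι → (Fin n → E) → ℝ} (h : ∀ x ∈ F, Good (f x)) (z : Fin n → E) :
    slot2 (L2op lam Γ) i j (fun y => ∑ x ∈ F, f x y) z
      = ∑ x ∈ F, slot2 (L2op lam Γ) i j (f x) z := by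
  classical
  induction F using Finset.induction_on with
  | empty => simpa using slot2_zero i j z
  | @insert a F' hx ih =>
    simp only [Finset.sum_insert hx]
    obtain ⟨m, C, hC, hb⟩ := h a (Finset.mem_insert_self a F')
    obtain ⟨m', C', hC', hb'⟩ := Good.sum F' (fun x hxF => h x (Finset.mem_insert_of_mem hxF))
    rw [show (fun y => f a y + ∑ x ∈ F', f x y) = (fun y => f a y + (fun y' => ∑ x ∈ F', f x y') y) from rfl,
      slot2_add i j m m' hb hb' z, ih fun x hxF => h x (Finset.mem_insert_of_mem hxF)]

lemma good_kacGen [IsMarkovKernel Γ] (hΛ : 0 ≤ Λ) (hlam : Measurable lam)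
    (hln : ∀ z, 0 ≤ lam z) (hll : ∀ z, lam z ≤ Λ) {N : ℕ}
    {ψ : (Fin N → E) → ℝ} (h : Good ψ) : Good (kacGen lam Γ N ψ) := by
  obtain ⟨m, C, hC, hb⟩ := h
  constructor
  · apply Measurable.const_mul
    apply Finset.measurable_sum
    intro i _
    apply Finset.measurable_sum
    intro j _
    by_cases hij : i < j
    · simpa [hij] using slot2_meas hlam i j m
    · simpa [hij] using measurable_const
  · refine ⟨(1/N : ℝ) * (N * (N * (2 * Λ * C))), by positivity, fun z => ?_⟩
    simp only [kacGen]
    rw [abs_mul, abs_of_nonneg (by positivity : (0:ℝ) ≤ (1/N:ℝ))]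
    refine mul_le_mul_of_nonneg_left ?_ (by positivity)
    calc |∑ i : Fin N, ∑ j : Fin N, (if i < j then slot2 (L2op lam Γ) i j ψ z else 0)|
        ≤ ∑ i : Fin N, |∑ j : Fin N, (if i < j then slot2 (L2op lam Γ) i j ψ z else 0)| :=
          Finset.abs_sum_le_sum_abs _ _
      _ ≤ ∑ _i : Fin N, (N * (2 * Λ * C)) := by
          refine Finset.sum_le_sum fun i _ => ?_
          calc |∑ j : Fin N, (if i < j then slot2 (L2op lam Γ) i j ψ z else 0)|
              ≤ ∑ j : Fin N, |(if i < j then slot2 (L2op lam Γ) i j ψ z else 0)| :=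
                Finset.abs_sum_le_sum_abs _ _
            _ ≤ ∑ _j : Fin N, (2 * Λ * C) := by
                refine Finset.sum_le_sum fun j _ => ?_
                by_cases hij : i < j
                · simpa [hij] using slot2_bdd hΛ hln hll i j hb z
                · simp [hij]; positivity
            _ = N * (2 * Λ * C) := by simp [mul_comm]
      _ = N * (N * (2 * Λ * C)) := by simp [mul_comm]

lemma good_kacGen_iter [IsMarkovKernel Γ] (hΛ : 0 ≤ Λ) (hlam : Measurable lam)
    (hln : ∀ z, 0 ≤ lam z) (hll : ∀ z, lam z ≤ Λ) {N : ℕ} (k : ℕ)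
    {ψ : (Fin N → E) → ℝ} (h : Good ψ) : Good ((kacGen lam Γ N)^[k] ψ) := by
  induction k with
  | zero => simpa using h
  | succ k ih =>
    rw [Function.iterate_succ_apply']
    exact good_kacGen hΛ hlam hln hll ih

lemma kacGen_sum [IsMarkovKernel Γ] {N : ℕ} {ι : Type*} (F : Finset ι)
    {f : ι → (Fin N → E) → ℝ} (h : ∀ x ∈ F, Good (f x)) :
    kacGen lam Γ N (fun y => ∑ x ∈ F, f x y) = fun z => ∑ x ∈ F, kacGen lam Γ N (f x) z := by
  funext z
  simp only [kacGen]
  rw [← Finset.mul_sum]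
  congr 1
  calc ∑ i : Fin N, ∑ j : Fin N, (if i < j then slot2 (L2op lam Γ) i j (fun y => ∑ x ∈ F, f x y) z else 0)
      = ∑ i : Fin N, ∑ j : Fin N, ∑ x ∈ F, (if i < j then slot2 (L2op lam Γ) i j (f x) z else 0) := by
        refine Finset.sum_congr rfl fun i _ => Finset.sum_congr rfl fun j _ => ?_
        by_cases hij : i < j
        · simpa [hij] using slot2_sum i j F h z
        · simp [hij]
    _ = ∑ x ∈ F, ∑ i : Fin N, ∑ j : Fin N, (if i < j then slot2 (L2op lam Γ) i j (f x) z else 0) := by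
        rw [show (∑ i : Fin N, ∑ j : Fin N, ∑ x ∈ F, (if i < j then slot2 (L2op lam Γ) i j (f x) z else 0))
            = ∑ i : Fin N, ∑ x ∈ F, ∑ j : Fin N, (if i < j then slot2 (L2op lam Γ) i j (f x) z else 0) from
          Finset.sum_congr rfl fun i _ => Finset.sum_comm]
        exact Finset.sum_comm
lemma slot2_comp {n : ℕ} (L : ((E × E) → ℝ) → ((E × E) → ℝ)) (σ : Equiv.Perm (Fin n))
    (i j : Fin n) (ψ : (Fin n → E) → ℝ) (z : Fin n → E) :
    slot2 L i j (fun y => ψ (y ∘ σ)) z = slot2 L (σ⁻¹ i) (σ⁻¹ j) ψ (z ∘ σ) := by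
  unfold slot2
  have hpoint : ((z ∘ σ) (σ⁻¹ i), (z ∘ σ) (σ⁻¹ j)) = (z i, z j) := by
    simp [Function.comp, Equiv.Perm.inv_def]
  rw [hpoint]
  congr 1
  funext p
  show ψ ((Function.update (Function.update z i p.1) j p.2) ∘ σ)
      = ψ (Function.update (Function.update (z ∘ σ) (σ⁻¹ i) p.1) (σ⁻¹ j) p.2)
  congr 1
  funext m
  simp only [Function.comp, Function.update_apply]
  have h1 : (σ m = j) ↔ (m = σ⁻¹ j) := by
    constructor
    · intro h; simp [Equiv.Perm.inv_def, ← h]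
    · intro h; simp [h, Equiv.Perm.inv_def]
  have h2 : (σ m = i) ↔ (m = σ⁻¹ i) := by
    constructor
    · intro h; simp [Equiv.Perm.inv_def, ← h]
    · intro h; simp [h, Equiv.Perm.inv_def]
  by_cases hj : σ m = j
  · simp [hj, h1.mp hj]
  · have hj' : ¬ (m = σ⁻¹ j) := fun h => hj (h1.mpr h)
    by_cases hi : σ m = i
    · simp [hj, hj', hi, h2.mp hi]
    · have hi' : ¬ (m = σ⁻¹ i) := fun h => hi (h2.mpr h)
      rw [Equiv.Perm.inv_def] at hj' hi'
      simp [hj, hj', hi, hi']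

lemma L2op_swap [IsMarkovKernel Γ]
    (hls : ∀ a b : E, lam (a, b) = lam (b, a))
    (hΓs : ∀ a b : E, Γ (a, b) = (Γ (b, a)).map Prod.swap)
    {ψ : E × E → ℝ} (hψ : Measurable ψ) (a b : E) :
    L2op lam Γ (fun p => ψ p.swap) (b, a) = L2op lam Γ ψ (a, b) := by
  unfold L2op
  have h1 : lam (b, a) = lam (a, b) := hls b a
  have h2 : ∫ w, (ψ (Prod.swap w) - ψ (Prod.swap (b, a))) ∂(Γ (b, a))
      = ∫ w, (ψ w - ψ (a, b)) ∂(Γ (a, b)) := by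
    rw [hΓs a b, integral_map measurable_swap.aemeasurable]
    · simp [Prod.swap]
    · exact (hψ.sub measurable_const).aestronglyMeasurable
  rw [h1, h2]

lemma slot2_swap [IsMarkovKernel Γ]
    (hls : ∀ a b : E, lam (a, b) = lam (b, a))
    (hΓs : ∀ a b : E, Γ (a, b) = (Γ (b, a)).map Prod.swap)
    {n : ℕ} {i j : Fin n} (hij : i ≠ j) {ψ : (Fin n → E) → ℝ} (hψ : Measurable ψ)
    (z : Fin n → E) :
    slot2 (L2op lam Γ) j i ψ z = slot2 (L2op lam Γ) i j ψ z := by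
  unfold slot2
  have hF : (fun p : E × E => ψ (Function.update (Function.update z j p.1) i p.2))
      = (fun p : E × E => ψ (Function.update (Function.update z i p.1) j p.2)) ∘ Prod.swap := by
    funext p
    simp only [Function.comp_apply, Prod.swap]
    rw [Function.update_comm hij.symm]
  rw [hF]
  exact L2op_swap hls hΓs
    (hψ.comp ((measurable_update2 i j).comp (measurable_const.prodMk measurable_id))) (z i) (z j)

lemma pair_key {n : ℕ} (f : Fin n → Fin n → ℝ) (hf : ∀ i j, i ≠ j → f i j = f j i)
    (P : Fin n → Fin n → Prop) [DecidableRel P]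
    (hP : ∀ i j, i ≠ j → (P i j ↔ ¬ P j i)) (hPd : ∀ i, ¬ P i i) :
    (2:ℝ) * ∑ i : Fin n, ∑ j : Fin n, (if P i j then f i j else 0)
      = ∑ i : Fin n, ∑ j : Fin n, (if i ≠ j then f i j else 0) := by
  classical
  have swap : ∑ i : Fin n, ∑ j : Fin n, (if P i j then f i j else 0)
      = ∑ i : Fin n, ∑ j : Fin n, (if P j i then f j i else 0) := Finset.sum_comm
  rw [two_mul]
  nth_rewrite 2 [swap]
  rw [← Finset.sum_add_distrib]
  refine Finset.sum_congr rfl fun i _ => ?_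
  rw [← Finset.sum_add_distrib]
  refine Finset.sum_congr rfl fun j _ => ?_
  by_cases hij : i = j
  · subst hij
    simp [hPd i]
  · by_cases hp : P i j
    · have hq : ¬ P j i := (hP i j hij).mp hp
      simp [hp, hq, hij, hf j i (Ne.symm hij)]
    · have hq : P j i := by
        by_contra hq
        exact hq (((hP j i (Ne.symm hij)).mpr) hp)
      simp only [hp, hq, if_true, if_false, hij, ne_eq, not_false_iff, zero_add]
      exact hf j i (Ne.symm hij)

lemma pair_sum_symm {n : ℕ} (f : Fin n → Fin n → ℝ) (hf : ∀ i j, i ≠ j → f i j = f j i)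
    (g : Equiv.Perm (Fin n)) :
    ∑ i : Fin n, ∑ j : Fin n, (if g i < g j then f i j else 0)
      = ∑ i : Fin n, ∑ j : Fin n, (if i < j then f i j else 0) := by
  classical
  have hlt : ∀ i j : Fin n, i ≠ j → (g i < g j ↔ ¬ g j < g i) := by
    intro i j hij
    constructor
    · intro h hlt; exact absurd (lt_trans h hlt) (lt_irrefl _)
    · intro h
      rcases lt_or_gt_of_ne (fun he : g i = g j => hij (g.injective he)) with h' | h'
      · exact h'
      · exact absurd h' h
  have hlt2 : ∀ i j : Fin n, i ≠ j → (i < j ↔ ¬ j < i) := by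
    intro i j hij
    constructor
    · intro h hlt; exact absurd (lt_trans h hlt) (lt_irrefl _)
    · intro h
      rcases lt_or_gt_of_ne hij with h' | h'
      · exact h'
      · exact absurd h' h
  have h1 := pair_key f hf (fun i j => g i < g j) hlt (fun i => lt_irrefl _)
  have h2 := pair_key f hf (fun i j => i < j) hlt2 (fun i => lt_irrefl _)
  exact mul_left_cancel₀ (two_ne_zero) (h1.trans h2.symm)

lemma kacGen_comp [IsMarkovKernel Γ] (hlam : Measurable lam)
    (hls : ∀ a b : E, lam (a, b) = lam (b, a))
    (hΓs : ∀ a b : E, Γ (a, b) = (Γ (b, a)).map Prod.swap)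
    {N : ℕ} {ψ : (Fin N → E) → ℝ} (hψ : Measurable ψ) (σ : Equiv.Perm (Fin N)) :
    kacGen lam Γ N (fun y => ψ (y ∘ σ)) = fun z => kacGen lam Γ N ψ (z ∘ σ) := by
  funext z
  simp only [kacGen]
  congr 1
  have step1 : ∑ i : Fin N, ∑ j : Fin N,
      (if i < j then slot2 (L2op lam Γ) i j (fun y => ψ (y ∘ σ)) z else 0)
      = ∑ i : Fin N, ∑ j : Fin N,
        (if i < j then slot2 (L2op lam Γ) (σ⁻¹ i) (σ⁻¹ j) ψ (z ∘ σ) else 0) := by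
    refine Finset.sum_congr rfl fun i _ => Finset.sum_congr rfl fun j _ => ?_
    by_cases hij : i < j
    · simp only [hij, if_true]
      exact slot2_comp _ σ i j ψ z
    · simp [hij]
  have step2 : ∑ i : Fin N, ∑ j : Fin N,
      (if σ i < σ j then slot2 (L2op lam Γ) i j ψ (z ∘ σ) else 0)
      = ∑ i : Fin N, ∑ j : Fin N,
        (if i < j then slot2 (L2op lam Γ) (σ⁻¹ i) (σ⁻¹ j) ψ (z ∘ σ) else 0) := by
    rw [← Equiv.sum_comp σ⁻¹ (fun i => ∑ j : Fin N,
      (if σ i < σ j then slot2 (L2op lam Γ) i j ψ (z ∘ σ) else 0))]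
    refine Finset.sum_congr rfl fun i _ => ?_
    rw [← Equiv.sum_comp σ⁻¹ (fun j =>
      (if σ (σ⁻¹ i) < σ j then slot2 (L2op lam Γ) (σ⁻¹ i) j ψ (z ∘ σ) else 0))]
    refine Finset.sum_congr rfl fun j _ => ?_
    simp [Equiv.Perm.inv_def]
  rw [step1, ← step2]
  refine pair_sum_symm _ (fun i j hij => ?_) σ
  exact (slot2_swap hls hΓs hij hψ (z ∘ σ)).symm

lemma kacGen_iter_comp [IsMarkovKernel Γ] (hΛ : 0 ≤ Λ) (hlam : Measurable lam)
    (hln : ∀ z, 0 ≤ lam z) (hll : ∀ z, lam z ≤ Λ)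
    (hls : ∀ a b : E, lam (a, b) = lam (b, a))
    (hΓs : ∀ a b : E, Γ (a, b) = (Γ (b, a)).map Prod.swap)
    {N : ℕ} (k : ℕ) {ψ : (Fin N → E) → ℝ} (h : Good ψ) (σ : Equiv.Perm (Fin N)) :
    (kacGen lam Γ N)^[k] (fun y => ψ (y ∘ σ)) = fun z => (kacGen lam Γ N)^[k] ψ (z ∘ σ) := by
  induction k with
  | zero => simp
  | succ k ih =>
    rw [Function.iterate_succ_apply', Function.iterate_succ_apply', ih]
    exact kacGen_comp hlam hls hΓs (good_kacGen_iter hΛ hlam hln hll k h).1 σ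

lemma measurable_comp_perm {N : ℕ} (σ : Equiv.Perm (Fin N)) :
    Measurable (fun z : Fin N → E => z ∘ σ) :=
  measurable_pi_lambda _ (fun m => measurable_pi_apply (σ m))

lemma integral_comp_perm {N : ℕ} {f₀ : Measure (Fin N → E)} [IsProbabilityMeasure f₀]
    (hsym : ∀ σ : Equiv.Perm (Fin N), f₀.map (fun x => x ∘ σ) = f₀)
    {ψ : (Fin N → E) → ℝ} (hψ : Measurable ψ) (σ : Equiv.Perm (Fin N)) :
    ∫ z, ψ (z ∘ σ) ∂f₀ = ∫ z, ψ z ∂f₀ := by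
  conv_rhs => rw [← hsym σ]
  rw [integral_map (measurable_comp_perm σ).aemeasurable hψ.aestronglyMeasurable]
def extN {t N : ℕ} (h : t ≤ N) (φ : (Fin t → E) → ℝ) : (Fin N → E) → ℝ :=
  fun z => φ (fun i => z (Fin.castLE h i))

lemma extN_meas {t N : ℕ} (h : t ≤ N) {φ : (Fin t → E) → ℝ} (hφ : Measurable φ) :
    Measurable (extN h φ) :=
  hφ.comp (measurable_pi_lambda _ fun i => measurable_pi_apply _)

lemma Good.extN {t N : ℕ} (h : t ≤ N) {φ : (Fin t → E) → ℝ} (hφ : Good φ) :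
    Good (Kac.extN h φ) := by
  obtain ⟨m, C, hC, hb⟩ := hφ
  exact ⟨extN_meas h m, C, hC, fun z => hb _⟩

lemma sum_fin_lt {N t : ℕ} (h : t ≤ N) (g : Fin N → ℝ) :
    ∑ j : Fin N, (if (j : ℕ) < t then g j else 0) = ∑ j : Fin t, g (Fin.castLE h j) := by
  classical
  rw [← Finset.sum_filter]
  refine Finset.sum_bij' (fun (j : Fin N) (hj : j ∈ Finset.univ.filter fun j : Fin N => (j:ℕ) < t)
      => (⟨(j : ℕ), (Finset.mem_filter.mp hj).2⟩ : Fin t))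
    (fun (j : Fin t) _ => Fin.castLE h j) ?_ ?_ ?_ ?_ ?_
  · intro a ha; exact Finset.mem_univ _
  · intro a ha
    simp [Fin.lt_def]
  · intro a ha; rfl
  · intro a ha; rfl
  · intro a ha; rfl

lemma count_lt {N t : ℕ} (h : t ≤ N) :
    ∑ j : Fin N, (if (j : ℕ) < t then (1:ℝ) else 0) = t := by
  rw [sum_fin_lt h (fun _ => (1:ℝ))]
  simp

lemma count_ge {N t : ℕ} (h : t ≤ N) :
    ∑ j : Fin N, (if t ≤ (j : ℕ) then (1:ℝ) else 0) = (N : ℝ) - t := by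
  have hsplit : ∀ j : Fin N, (if t ≤ (j : ℕ) then (1:ℝ) else 0)
      = 1 - (if (j : ℕ) < t then (1:ℝ) else 0) := by
    intro j
    by_cases hj : t ≤ (j : ℕ)
    · simp [hj, Nat.not_lt.mpr hj]
    · simp [hj, Nat.lt_of_not_le hj]
  simp only [hsplit]
  rw [Finset.sum_sub_distrib, count_lt h]
  simp

lemma slot2_castLE {t N : ℕ} (h : t ≤ N) (L : ((E × E) → ℝ) → ((E × E) → ℝ))
    (i j : Fin t) (φ : (Fin t → E) → ℝ) (z : Fin N → E) :
    slot2 L (Fin.castLE h i) (Fin.castLE h j) (extN h φ) z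
      = slot2 L i j φ (fun m => z (Fin.castLE h m)) := by
  unfold slot2 extN
  congr 1
  funext p
  congr 1
  funext m
  simp only [Function.update_apply]
  have e1 : (Fin.castLE h m = Fin.castLE h j) ↔ (m = j) := by
    constructor
    · intro he; exact Fin.ext (by simpa [Fin.ext_iff] using he)
    · intro he; rw [he]
  have e2 : (Fin.castLE h m = Fin.castLE h i) ↔ (m = i) := by
    constructor
    · intro he; exact Fin.ext (by simpa [Fin.ext_iff] using he)
    · intro he; rw [he]
  by_cases h1 : m = j
  · simp [h1, e1]
  · by_cases h2 : m = i
    · simp [h1, h2, e1, e2]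
    · simp [h1, h2, e1, e2]

lemma slot2_ext_zero [IsMarkovKernel Γ] {t N : ℕ} (h : t ≤ N) (i j : Fin N)
    (hi : t ≤ (i : ℕ)) (hj : t ≤ (j : ℕ)) (φ : (Fin t → E) → ℝ) (z : Fin N → E) :
    slot2 (L2op lam Γ) i j (extN h φ) z = 0 := by
  rw [slot2_eq]
  have hz : ∀ w : E × E, extN h φ (Function.update (Function.update z i w.1) j w.2) = extN h φ z := by
    intro w
    unfold extN
    congr 1
    funext m
    have hmi : Fin.castLE h m ≠ i := by
      intro he
      have : (m : ℕ) = (i : ℕ) := by simpa [Fin.ext_iff] using he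
      omega
    have hmj : Fin.castLE h m ≠ j := by
      intro he
      have : (m : ℕ) = (j : ℕ) := by simpa [Fin.ext_iff] using he
      omega
    simp [Function.update_apply, hmi, hmj]
  simp only [hz, sub_self, integral_zero, mul_zero]

def Bfun (lam : E × E → ℝ) (Γ : Kernel (E × E) (E × E)) (t : ℕ) (φ : (Fin t → E) → ℝ) :
    (Fin t → E) → ℝ :=
  fun y => ∑ i : Fin t, ∑ j : Fin t, (if i < j then slot2 (L2op lam Γ) i j φ y else 0)

lemma pair_count (t : ℕ) :
    ∑ i : Fin t, ∑ j : Fin t, (if i < j then (1:ℝ) else 0) = t * (t - 1) / 2 := by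
  classical
  have hlt2 : ∀ i j : Fin t, i ≠ j → ((i < j) ↔ ¬ j < i) := by
    intro i j hij
    constructor
    · intro h hlt; exact absurd (lt_trans h hlt) (lt_irrefl _)
    · intro h
      rcases lt_or_gt_of_ne hij with h' | h'
      · exact h'
      · exact absurd h' h
  have h2 := pair_key (fun _ _ => (1:ℝ)) (fun _ _ _ => rfl) (fun i j : Fin t => i < j)
    hlt2 (fun i => lt_irrefl _)
  have hne : ∑ i : Fin t, ∑ j : Fin t, (if i ≠ j then (1:ℝ) else 0) = t * t - t := by
    have : ∀ i : Fin t, ∑ j : Fin t, (if i ≠ j then (1:ℝ) else 0) = (t : ℝ) - 1 := by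
      intro i
      have : ∀ j : Fin t, (if i ≠ j then (1:ℝ) else 0) = 1 - (if j = i then (1:ℝ) else 0) := by
        intro j
        by_cases hj : j = i
        · simp [hj]
        · simp [hj, Ne.symm hj]
      simp only [this]
      rw [Finset.sum_sub_distrib, Finset.sum_ite_eq' Finset.univ i (fun _ => (1:ℝ))]
      simp
    simp only [this]
    rw [Finset.sum_const]
    simp [mul_sub]
  rw [hne] at h2
  linarith

lemma Bfun_bdd [IsMarkovKernel Γ] (hΛ : 0 ≤ Λ) (hln : ∀ z, 0 ≤ lam z) (hll : ∀ z, lam z ≤ Λ)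
    {t : ℕ} {φ : (Fin t → E) → ℝ} {C : ℝ} (hC : 0 ≤ C) (hb : ∀ y, |φ y| ≤ C) (y : Fin t → E) :
    |Bfun lam Γ t φ y| ≤ (t * (t - 1) / 2) * (2 * Λ * C) := by
  have hbd : ∀ i j : Fin t, |(if i < j then slot2 (L2op lam Γ) i j φ y else 0)|
      ≤ (if i < j then (1:ℝ) else 0) * (2 * Λ * C) := by
    intro i j
    by_cases hij : i < j
    · simpa [hij] using slot2_bdd hΛ hln hll i j hb y
    · simp [hij]
  calc |Bfun lam Γ t φ y| ≤ ∑ i : Fin t, |∑ j : Fin t, (if i < j then slot2 (L2op lam Γ) i j φ y else 0)| :=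
        Finset.abs_sum_le_sum_abs _ _
    _ ≤ ∑ i : Fin t, ∑ j : Fin t, ((if i < j then (1:ℝ) else 0) * (2 * Λ * C)) := by
        refine Finset.sum_le_sum fun i _ => ?_
        exact (Finset.abs_sum_le_sum_abs _ _).trans (Finset.sum_le_sum fun j _ => hbd i j)
    _ = (t * (t - 1) / 2) * (2 * Λ * C) := by
        rw [show (∑ i : Fin t, ∑ j : Fin t, ((if i < j then (1:ℝ) else 0) * (2 * Λ * C)))
              = (∑ i : Fin t, ∑ j : Fin t, (if i < j then (1:ℝ) else 0)) * (2 * Λ * C) from by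
            rw [Finset.sum_mul]
            refine Finset.sum_congr rfl fun i _ => by rw [Finset.sum_mul]]
        rw [pair_count]

lemma Good.Bfun [IsMarkovKernel Γ] (hΛ : 0 ≤ Λ) (hlam : Measurable lam)
    (hln : ∀ z, 0 ≤ lam z) (hll : ∀ z, lam z ≤ Λ) {t : ℕ}
    {φ : (Fin t → E) → ℝ} (h : Good φ) : Good (Kac.Bfun lam Γ t φ) := by
  obtain ⟨m, C, hC, hb⟩ := h
  constructor
  · apply Finset.measurable_sum
    intro i _
    apply Finset.measurable_sum
    intro j _
    by_cases hij : i < j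
    · simpa [hij] using slot2_meas hlam i j m
    · simpa [hij] using measurable_const
  · refine ⟨(t * (t - 1) / 2) * (2 * Λ * C), ?_, Bfun_bdd hΛ hln hll hC hb⟩
    have h1 : (0:ℝ) ≤ t * (t-1) / 2 := by
      rcases Nat.eq_zero_or_pos t with ht | ht
      · simp [ht]
      · have : (1:ℝ) ≤ t := by exact_mod_cast ht
        have h0 : (0:ℝ) ≤ t := by positivity
        nlinarith
    positivity
lemma slot2_smul [IsMarkovKernel Γ] {n : ℕ} (i j : Fin n) (c : ℝ) (ψ : (Fin n → E) → ℝ)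
    (z : Fin n → E) :
    slot2 (L2op lam Γ) i j (fun y => c * ψ y) z = c * slot2 (L2op lam Γ) i j ψ z := by
  simp only [slot2_eq]
  rw [show (fun w : E × E => c * ψ (Function.update (Function.update z i w.1) j w.2) - c * ψ z)
      = fun w : E × E => c * (ψ (Function.update (Function.update z i w.1) j w.2) - ψ z) from by
    funext w; ring]
  rw [integral_const_mul]
  ring

lemma kacGen_smul [IsMarkovKernel Γ] {N : ℕ} (c : ℝ) (ψ : (Fin N → E) → ℝ) :
    kacGen lam Γ N (fun y => c * ψ y) = fun z => c * kacGen lam Γ N ψ z := by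
  funext z
  simp only [kacGen]
  rw [show (∑ i : Fin N, ∑ j : Fin N, (if i < j then slot2 (L2op lam Γ) i j (fun y => c * ψ y) z else 0))
      = ∑ i : Fin N, ∑ j : Fin N, (c * if i < j then slot2 (L2op lam Γ) i j ψ z else 0) from by
    refine Finset.sum_congr rfl fun i _ => Finset.sum_congr rfl fun j _ => ?_
    by_cases hij : i < j
    · simpa [hij] using slot2_smul i j c ψ z
    · simp [hij]]
  simp only [← Finset.mul_sum]
  ring

lemma kacGen_iter_smul [IsMarkovKernel Γ] {N : ℕ} (k : ℕ) (c : ℝ) (ψ : (Fin N → E) → ℝ) :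
    (kacGen lam Γ N)^[k] (fun y => c * ψ y) = fun z => c * (kacGen lam Γ N)^[k] ψ z := by
  induction k with
  | zero => simp
  | succ k ih =>
    rw [Function.iterate_succ_apply', Function.iterate_succ_apply', ih, kacGen_smul]

lemma kacGen_add [IsMarkovKernel Γ] {N : ℕ} {ψ ψ' : (Fin N → E) → ℝ}
    (h : Good ψ) (h' : Good ψ') :
    kacGen lam Γ N (fun y => ψ y + ψ' y) = fun z => kacGen lam Γ N ψ z + kacGen lam Γ N ψ' z := by
  classical
  have := kacGen_sum (lam := lam) (Γ := Γ) (N := N) ({0, 1} : Finset (Fin 2))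
    (f := fun x => if x = 0 then ψ else ψ') ?_
  · funext z
    have e1 : (fun y => ∑ x ∈ ({0,1} : Finset (Fin 2)), (if x = 0 then ψ else ψ') y)
        = fun y => ψ y + ψ' y := by
      funext y; simp
    rw [← e1, this]
    simp
  · intro x hx
    by_cases hx0 : x = 0 <;> simp [hx0, h, h']

lemma kacGen_iter_add [IsMarkovKernel Γ] (hΛ : 0 ≤ Λ) (hlam : Measurable lam)
    (hln : ∀ z, 0 ≤ lam z) (hll : ∀ z, lam z ≤ Λ) {N : ℕ} (k : ℕ)
    {ψ ψ' : (Fin N → E) → ℝ} (h : Good ψ) (h' : Good ψ') :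
    (kacGen lam Γ N)^[k] (fun y => ψ y + ψ' y)
      = fun z => (kacGen lam Γ N)^[k] ψ z + (kacGen lam Γ N)^[k] ψ' z := by
  induction k generalizing ψ ψ' with
  | zero => simp
  | succ k ih =>
    rw [Function.iterate_succ_apply, Function.iterate_succ_apply, Function.iterate_succ_apply,
      kacGen_add h h', ih (good_kacGen hΛ hlam hln hll h) (good_kacGen hΛ hlam hln hll h')]

lemma kacGen_iter_finsum [IsMarkovKernel Γ] (hΛ : 0 ≤ Λ) (hlam : Measurable lam)
    (hln : ∀ z, 0 ≤ lam z) (hll : ∀ z, lam z ≤ Λ) {N : ℕ} (k : ℕ) {ι : Type*} (F : Finset ι)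
    {f : ι → (Fin N → E) → ℝ} (h : ∀ x ∈ F, Good (f x)) :
    (kacGen lam Γ N)^[k] (fun y => ∑ x ∈ F, f x y)
      = fun z => ∑ x ∈ F, (kacGen lam Γ N)^[k] (f x) z := by
  classical
  induction F using Finset.induction_on with
  | empty =>
    simp only [Finset.sum_empty]
    rw [show (fun _ : Fin N → E => (0:ℝ)) = fun y => (0:ℝ) * (0:ℝ) from by funext y; ring,
      kacGen_iter_smul]
    funext z; simp
  | @insert a F' hx ih =>
    simp only [Finset.sum_insert hx]
    rw [show (fun y => f a y + ∑ x ∈ F', f x y)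
        = (fun y => f a y + (fun y' => ∑ x ∈ F', f x y') y) from rfl,
      kacGen_iter_add hΛ hlam hln hll k (h a (Finset.mem_insert_self a F'))
        (Good.sum F' fun x hxF => h x (Finset.mem_insert_of_mem hxF)),
      ih fun x hxF => h x (Finset.mem_insert_of_mem hxF)]
lemma ext_Dop [IsMarkovKernel Γ] {t N : ℕ} (ht : t < N) (φ : (Fin t → E) → ℝ) (z : Fin N → E) :
    ∑ i : Fin t, slot2 (L2op lam Γ) (Fin.castLE (le_of_lt ht) i) ⟨t, ht⟩
        (extN (le_of_lt ht) φ) z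
      = extN (Nat.succ_le_of_lt ht) (Dop lam Γ t φ) z := by
  unfold extN Dop slot2
  beta_reduce
  refine Finset.sum_congr rfl fun i _ => ?_
  have hpt1 : z (Fin.castLE (Nat.succ_le_of_lt ht) i.castSucc)
      = z (Fin.castLE (le_of_lt ht) i) := by
    congr 1
  have hpt2 : z (Fin.castLE (Nat.succ_le_of_lt ht) (Fin.last t)) = z ⟨t, ht⟩ := by
    congr 1
  rw [hpt1, hpt2]
  congr 1
  funext p
  congr 1
  funext m
  simp only [Function.update_apply]
  have h1 : (Fin.castLE (le_of_lt ht) m = (⟨t, ht⟩ : Fin N)) ↔ False := by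
    simp only [Fin.ext_iff, Fin.coe_castLE, iff_false]
    exact fun he => absurd he (by omega)
  have h2 : (Fin.castLE (le_of_lt ht) m = Fin.castLE (le_of_lt ht) i) ↔ m = i := by
    simp [Fin.ext_iff]
  have h3 : z (Fin.castLE (Nat.succ_le_of_lt ht) m.castSucc)
      = z (Fin.castLE (le_of_lt ht) m) := by
    congr 1
  have h4 : (Fin.castLE (le_of_lt ht) i = (⟨t, ht⟩ : Fin N)) ↔ False := by
    simp only [Fin.ext_iff, Fin.coe_castLE, iff_false]
    exact fun he => absurd he (by omega)
  by_cases hmi : m = i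
  · simp [h1, h2, h4, hmi]
  · simp [h1, h2, h4, hmi, h3]

lemma extN_comp_swap {t N : ℕ} (h : t ≤ N) (φ : (Fin t → E) → ℝ) (j j' : Fin N)
    (hj : t ≤ (j : ℕ)) (hj' : t ≤ (j' : ℕ)) :
    (fun y : Fin N → E => extN h φ (y ∘ (Equiv.swap j j'))) = extN h φ := by
  funext y
  unfold extN
  congr 1
  funext m
  simp only [Function.comp_apply]
  congr 1
  refine Equiv.swap_apply_of_ne_of_ne ?_ ?_
  · intro he
    have : (m : ℕ) = (j : ℕ) := by simpa [Fin.ext_iff] using he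
    omega
  · intro he
    have : (m : ℕ) = (j' : ℕ) := by simpa [Fin.ext_iff] using he
    omega

lemma slot2_ext_swap [IsMarkovKernel Γ] {t N : ℕ} (ht : t < N) (i : Fin t) (j : Fin N)
    (hj : t ≤ (j : ℕ)) (φ : (Fin t → E) → ℝ) (z : Fin N → E) :
    slot2 (L2op lam Γ) (Fin.castLE (le_of_lt ht) i) j (extN (le_of_lt ht) φ) z
      = slot2 (L2op lam Γ) (Fin.castLE (le_of_lt ht) i) ⟨t, ht⟩ (extN (le_of_lt ht) φ)
          (z ∘ (Equiv.swap j ⟨t, ht⟩)) := by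
  set σ : Equiv.Perm (Fin N) := Equiv.swap j ⟨t, ht⟩ with hσ
  have hext : (fun y : Fin N → E => extN (le_of_lt ht) φ (y ∘ σ)) = extN (le_of_lt ht) φ :=
    extN_comp_swap (le_of_lt ht) φ j ⟨t, ht⟩ hj le_rfl
  have hcomp := slot2_comp (L2op lam Γ) σ (Fin.castLE (le_of_lt ht) i) j
    (extN (le_of_lt ht) φ) z
  rw [hext] at hcomp
  rw [hcomp]
  congr 1
  · rw [hσ, Equiv.swap_inv]
    refine Equiv.swap_apply_of_ne_of_ne ?_ ?_
    · intro he
      have : (i : ℕ) = (j : ℕ) := by simpa [Fin.ext_iff] using he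
      omega
    · intro he
      have : (i : ℕ) = t := by simpa [Fin.ext_iff] using he
      omega
  · rw [hσ, Equiv.swap_inv, Equiv.swap_apply_left]

lemma Dop_eq_sum [IsMarkovKernel Γ] (t : ℕ) (φ : (Fin t → E) → ℝ) :
    Dop lam Γ t φ = fun z => ∑ i : Fin t, slot2 (L2op lam Γ) i.castSucc (Fin.last t)
      (fun y => φ (fun m => y m.castSucc)) z := by
  funext z
  unfold Dop slot2
  refine Finset.sum_congr rfl fun i _ => ?_
  congr 1
  funext p
  congr 1
  funext m
  simp only [Function.update_apply]
  have h1 : (m.castSucc = Fin.last t) ↔ False := by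
    simp only [Fin.ext_iff, Fin.coe_castSucc, Fin.val_last, iff_false]
    exact fun he => absurd he (by omega)
  have h2 : (m.castSucc = i.castSucc) ↔ m = i := by
    simp [Fin.ext_iff]
  have h3 : (i.castSucc = Fin.last t) ↔ False := by
    simp only [Fin.ext_iff, Fin.coe_castSucc, Fin.val_last, iff_false]
    exact fun he => absurd he (by omega)
  by_cases hmi : m = i
  · simp [h1, h2, h3, hmi]
  · simp [h1, h2, h3, hmi]

lemma good_Dop [IsMarkovKernel Γ] (hΛ : 0 ≤ Λ) (hlam : Measurable lam)
    (hln : ∀ z, 0 ≤ lam z) (hll : ∀ z, lam z ≤ Λ) {t : ℕ}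
    {φ : (Fin t → E) → ℝ} (h : Good φ) : Good (Dop lam Γ t φ) := by
  rw [Dop_eq_sum]
  refine Good.sum Finset.univ fun i _ => ?_
  refine Good.slot2 hΛ hlam hln hll _ _ ?_
  obtain ⟨m, C, hC, hb⟩ := h
  exact ⟨m.comp (measurable_pi_lambda _ fun i => measurable_pi_apply _), C, hC, fun y => hb _⟩

lemma Dop_bdd [IsMarkovKernel Γ] (hΛ : 0 ≤ Λ) (hln : ∀ z, 0 ≤ lam z) (hll : ∀ z, lam z ≤ Λ)
    {t : ℕ} {φ : (Fin t → E) → ℝ} {C : ℝ} (hb : ∀ y, |φ y| ≤ C) (z : Fin (t+1) → E) :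
    |Dop lam Γ t φ z| ≤ t * (2 * Λ * C) := by
  rw [Dop_eq_sum]
  have h1 := Finset.abs_sum_le_sum_abs
    (fun i : Fin t => slot2 (L2op lam Γ) i.castSucc (Fin.last t)
      (fun y => φ (fun m => y m.castSucc)) z) Finset.univ
  have h2 : ∑ i : Fin t, |slot2 (L2op lam Γ) i.castSucc (Fin.last t)
      (fun y => φ (fun m => y m.castSucc)) z| ≤ ∑ _i : Fin t, (2 * Λ * C) := by
    refine Finset.sum_le_sum fun i _ => ?_
    exact slot2_bdd hΛ hln hll _ _ (fun y => hb _) z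
  have h3 : ∑ _i : Fin t, (2 * Λ * C) = t * (2 * Λ * C) := by simp [mul_comm]
  linarith

lemma kacGen_ext_eq [IsMarkovKernel Γ] {t N : ℕ} (ht : t < N) (φ : (Fin t → E) → ℝ) :
    kacGen lam Γ N (extN (le_of_lt ht) φ)
      = fun z => (1/N : ℝ) * (extN (le_of_lt ht) (Bfun lam Γ t φ) z
          + ∑ j : Fin N, (if t ≤ (j : ℕ)
              then extN (Nat.succ_le_of_lt ht) (Dop lam Γ t φ) (z ∘ (Equiv.swap j ⟨t, ht⟩))
              else 0)) := by
  classical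
  funext z
  simp only [kacGen]
  congr 1
  have key : ∀ i j : Fin N,
      (if i < j then slot2 (L2op lam Γ) i j (extN (le_of_lt ht) φ) z else 0)
      = (if (i:ℕ) < t then (if (j:ℕ) < t then
            (if i < j then slot2 (L2op lam Γ) i j (extN (le_of_lt ht) φ) z else 0) else 0) else 0)
        + (if (i:ℕ) < t then (if t ≤ (j:ℕ) then
            slot2 (L2op lam Γ) i j (extN (le_of_lt ht) φ) z else 0) else 0) := by
    intro i j
    by_cases hi : (i:ℕ) < t
    · by_cases hj : (j:ℕ) < t
      · simp [hi, hj, Nat.not_le.mpr hj]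
      · have hj' : t ≤ (j:ℕ) := Nat.le_of_not_lt hj
        have hij : i < j := by
          rw [Fin.lt_def]; omega
        simp [hi, hj, hj', hij]
    · have hi' : t ≤ (i:ℕ) := Nat.le_of_not_lt hi
      by_cases hij : i < j
      · have hj' : t ≤ (j:ℕ) := by
          have := hij
          rw [Fin.lt_def] at this
          omega
        simp [hi, hij, slot2_ext_zero (le_of_lt ht) i j hi' hj' φ z]
      · simp [hi, hij]
  have e1 : (∑ i : Fin N, ∑ j : Fin N,
      (if i < j then slot2 (L2op lam Γ) i j (extN (le_of_lt ht) φ) z else 0))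
      = (∑ i : Fin N, ∑ j : Fin N, (if (i:ℕ) < t then (if (j:ℕ) < t then
            (if i < j then slot2 (L2op lam Γ) i j (extN (le_of_lt ht) φ) z else 0) else 0) else 0))
        + (∑ i : Fin N, ∑ j : Fin N, (if (i:ℕ) < t then (if t ≤ (j:ℕ) then
            slot2 (L2op lam Γ) i j (extN (le_of_lt ht) φ) z else 0) else 0)) := by
    rw [← Finset.sum_add_distrib]
    refine Finset.sum_congr rfl fun i _ => ?_
    rw [← Finset.sum_add_distrib]
    exact Finset.sum_congr rfl fun j _ => key i j
  rw [e1]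
  congr 1
  · -- B part
    have hpull : ∀ i : Fin N, ∑ j : Fin N, (if (i:ℕ) < t then (if (j:ℕ) < t then
          (if i < j then slot2 (L2op lam Γ) i j (extN (le_of_lt ht) φ) z else 0) else 0) else 0)
        = (if (i:ℕ) < t then ∑ j : Fin N, (if (j:ℕ) < t then
          (if i < j then slot2 (L2op lam Γ) i j (extN (le_of_lt ht) φ) z else 0) else 0) else 0) := by
      intro i
      by_cases hi : (i:ℕ) < t <;> simp [hi]
    rw [show (∑ i : Fin N, ∑ j : Fin N, (if (i:ℕ) < t then (if (j:ℕ) < t then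
          (if i < j then slot2 (L2op lam Γ) i j (extN (le_of_lt ht) φ) z else 0) else 0) else 0))
        = ∑ i : Fin N, (if (i:ℕ) < t then ∑ j : Fin N, (if (j:ℕ) < t then
          (if i < j then slot2 (L2op lam Γ) i j (extN (le_of_lt ht) φ) z else 0) else 0) else 0) from
      Finset.sum_congr rfl fun i _ => hpull i]
    rw [sum_fin_lt (le_of_lt ht)]
    unfold extN Bfun
    refine Finset.sum_congr rfl fun i _ => ?_
    rw [sum_fin_lt (le_of_lt ht)]
    refine Finset.sum_congr rfl fun j _ => ?_
    have hlt : (Fin.castLE (le_of_lt ht) i < Fin.castLE (le_of_lt ht) j) ↔ i < j := by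
      simp only [Fin.lt_def, Fin.coe_castLE]
    by_cases hij : i < j
    · rw [if_pos (hlt.mpr hij), if_pos hij]
      exact slot2_castLE (le_of_lt ht) _ i j φ z
    · rw [if_neg (fun h => hij (hlt.mp h)), if_neg hij]
  · -- D part
    have hpull : ∀ i : Fin N, ∑ j : Fin N, (if (i:ℕ) < t then (if t ≤ (j:ℕ) then
          slot2 (L2op lam Γ) i j (extN (le_of_lt ht) φ) z else 0) else 0)
        = (if (i:ℕ) < t then ∑ j : Fin N, (if t ≤ (j:ℕ) then
          slot2 (L2op lam Γ) i j (extN (le_of_lt ht) φ) z else 0) else 0) := by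
      intro i
      by_cases hi : (i:ℕ) < t <;> simp [hi]
    rw [show (∑ i : Fin N, ∑ j : Fin N, (if (i:ℕ) < t then (if t ≤ (j:ℕ) then
          slot2 (L2op lam Γ) i j (extN (le_of_lt ht) φ) z else 0) else 0))
        = ∑ i : Fin N, (if (i:ℕ) < t then ∑ j : Fin N, (if t ≤ (j:ℕ) then
          slot2 (L2op lam Γ) i j (extN (le_of_lt ht) φ) z else 0) else 0) from
      Finset.sum_congr rfl fun i _ => hpull i]
    rw [sum_fin_lt (le_of_lt ht)]
    rw [Finset.sum_comm]
    refine Finset.sum_congr rfl fun j _ => ?_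
    by_cases hj : t ≤ (j:ℕ)
    · simp only [hj, if_true]
      rw [show (∑ i : Fin t, slot2 (L2op lam Γ) (Fin.castLE (le_of_lt ht) i) j
            (extN (le_of_lt ht) φ) z)
          = ∑ i : Fin t, slot2 (L2op lam Γ) (Fin.castLE (le_of_lt ht) i) ⟨t, ht⟩
            (extN (le_of_lt ht) φ) (z ∘ (Equiv.swap j ⟨t, ht⟩)) from
        Finset.sum_congr rfl fun i _ => slot2_ext_swap ht i j hj φ z]
      exact ext_Dop ht φ (z ∘ (Equiv.swap j ⟨t, ht⟩))
    · simp [hj]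
lemma step_integral [IsMarkovKernel Γ] (hΛ : 0 ≤ Λ) (hlam : Measurable lam)
    (hln : ∀ z, 0 ≤ lam z) (hll : ∀ z, lam z ≤ Λ)
    (hls : ∀ a b : E, lam (a, b) = lam (b, a))
    (hΓs : ∀ a b : E, Γ (a, b) = (Γ (b, a)).map Prod.swap)
    {N : ℕ} (f₀ : Measure (Fin N → E)) [IsProbabilityMeasure f₀]
    (hsym : ∀ σ : Equiv.Perm (Fin N), f₀.map (fun x => x ∘ σ) = f₀)
    {t : ℕ} (ht : t < N) {φ : (Fin t → E) → ℝ} (hφ : Good φ) (k : ℕ) :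
    ∫ z, (kacGen lam Γ N)^[k+1] (extN (le_of_lt ht) φ) z ∂f₀
      = (1/N : ℝ) * ∫ z, (kacGen lam Γ N)^[k] (extN (le_of_lt ht) (Bfun lam Γ t φ)) z ∂f₀
        + (((N:ℝ) - t)/N) *
          ∫ z, (kacGen lam Γ N)^[k] (extN (Nat.succ_le_of_lt ht) (Dop lam Γ t φ)) z ∂f₀ := by
  classical
  have int_of_good : ∀ {g : (Fin N → E) → ℝ}, Good g → Integrable g f₀ := by
    intro g hg
    obtain ⟨m, C, hC, hb⟩ := hg
    exact integrable_of_bdd m hb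
  have hGB : Good (extN (le_of_lt ht) (Bfun lam Γ t φ)) :=
    Good.extN _ (Good.Bfun hΛ hlam hln hll hφ)
  have hGD : Good (extN (Nat.succ_le_of_lt ht) (Dop lam Γ t φ)) :=
    Good.extN _ (good_Dop hΛ hlam hln hll hφ)
  have hGg : ∀ j : Fin N, Good (fun z : Fin N → E => (if t ≤ (j : ℕ)
      then extN (Nat.succ_le_of_lt ht) (Dop lam Γ t φ) (z ∘ (Equiv.swap j ⟨t, ht⟩)) else 0)) := by
    intro j
    by_cases hj : t ≤ (j : ℕ)
    · simp only [hj, if_true]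
      obtain ⟨m, C, hC, hb⟩ := hGD
      exact ⟨m.comp (measurable_comp_perm _), C, hC, fun z => hb _⟩
    · simp only [hj, if_false]
      exact Good.zero
  have hGsum : Good (fun z : Fin N → E => ∑ j : Fin N, (if t ≤ (j : ℕ)
      then extN (Nat.succ_le_of_lt ht) (Dop lam Γ t φ) (z ∘ (Equiv.swap j ⟨t, ht⟩)) else 0)) :=
    Good.sum Finset.univ fun j _ => hGg j
  have e1 : (kacGen lam Γ N)^[k+1] (extN (le_of_lt ht) φ)
      = fun z => (1/N:ℝ) * (kacGen lam Γ N)^[k]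
          (fun y => extN (le_of_lt ht) (Bfun lam Γ t φ) y
            + ∑ j : Fin N, (if t ≤ (j : ℕ)
              then extN (Nat.succ_le_of_lt ht) (Dop lam Γ t φ) (y ∘ (Equiv.swap j ⟨t, ht⟩))
              else 0)) z := by
    rw [Function.iterate_succ_apply, kacGen_ext_eq ht φ, kacGen_iter_smul]
  have e2 := kacGen_iter_add (Γ := Γ) hΛ hlam hln hll k hGB hGsum
  have e3 := kacGen_iter_finsum (Γ := Γ) hΛ hlam hln hll k Finset.univ (fun j (_ : j ∈ Finset.univ) => hGg j)
  have e4 : ∀ j : Fin N, ∫ z, (kacGen lam Γ N)^[k] (fun y : Fin N → E => (if t ≤ (j : ℕ)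
      then extN (Nat.succ_le_of_lt ht) (Dop lam Γ t φ) (y ∘ (Equiv.swap j ⟨t, ht⟩)) else 0)) z ∂f₀
      = (if t ≤ (j : ℕ) then (1:ℝ) else 0)
        * ∫ z, (kacGen lam Γ N)^[k] (extN (Nat.succ_le_of_lt ht) (Dop lam Γ t φ)) z ∂f₀ := by
    intro j
    by_cases hj : t ≤ (j : ℕ)
    · simp only [hj, if_true, one_mul]
      rw [kacGen_iter_comp hΛ hlam hln hll hls hΓs k hGD (Equiv.swap j ⟨t, ht⟩)]
      exact integral_comp_perm hsym (good_kacGen_iter hΛ hlam hln hll k hGD).1 _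
    · simp only [hj, if_false, zero_mul]
      rw [show (fun _ : Fin N → E => (0:ℝ)) = fun y : Fin N → E => (0:ℝ) * (0:ℝ) from by
        funext y; ring, kacGen_iter_smul]
      simp
  rw [e1, integral_const_mul, e2, integral_add (int_of_good (good_kacGen_iter hΛ hlam hln hll k hGB))
    (int_of_good (good_kacGen_iter hΛ hlam hln hll k hGsum)), e3,
    integral_finset_sum _ (fun j _ => int_of_good (good_kacGen_iter hΛ hlam hln hll k (hGg j))),
    Finset.sum_congr rfl (fun j (_ : j ∈ Finset.univ) => e4 j), ← Finset.sum_mul,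
    count_ge (le_of_lt ht)]
  ring
lemma good_Dpow [IsMarkovKernel Γ] (hΛ : 0 ≤ Λ) (hlam : Measurable lam)
    (hln : ∀ z, 0 ≤ lam z) (hll : ∀ z, lam z ≤ Λ) (k : ℕ) :
    ∀ (s : ℕ) {φ : (Fin s → E) → ℝ}, Good φ → Good (Dpow lam Γ k s φ) := by
  induction k with
  | zero => intro s φ h; exact h
  | succ k ih =>
    intro s φ h
    show Good (Dop lam Γ (s+k) (Dpow lam Γ k s φ))
    exact good_Dop hΛ hlam hln hll (ih s h)

lemma Dpow_bdd [IsMarkovKernel Γ] (hΛ : 0 ≤ Λ) (hln : ∀ z, 0 ≤ lam z) (hll : ∀ z, lam z ≤ Λ)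
    (k : ℕ) :
    ∀ (s : ℕ) (φ : (Fin s → E) → ℝ) (C : ℝ), 0 ≤ C → (∀ y, |φ y| ≤ C) →
    ∀ z, |Dpow lam Γ k s φ z| ≤ (2*Λ)^k * (∏ m ∈ Finset.range k, ((s+m:ℕ):ℝ)) * C := by
  induction k with
  | zero => intro s φ C hC hb z; simpa [Dpow] using hb z
  | succ k ih =>
    intro s φ C hC hb z
    have hbk := ih s φ C hC hb
    have hCk : 0 ≤ (2*Λ)^k * (∏ m ∈ Finset.range k, ((s+m:ℕ):ℝ)) * C := by
      have : (0:ℝ) ≤ ∏ m ∈ Finset.range k, ((s+m:ℕ):ℝ) :=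
        Finset.prod_nonneg fun m _ => by positivity
      positivity
    have h1 : |Dop lam Γ (s+k) (Dpow lam Γ k s φ) z|
        ≤ (s+k : ℕ) * (2 * Λ * ((2*Λ)^k * (∏ m ∈ Finset.range k, ((s+m:ℕ):ℝ)) * C)) :=
      Dop_bdd hΛ hln hll hbk z
    calc |Dpow lam Γ (k+1) s φ z| = |Dop lam Γ (s+k) (Dpow lam Γ k s φ) z| := rfl
      _ ≤ (s+k : ℕ) * (2 * Λ * ((2*Λ)^k * (∏ m ∈ Finset.range k, ((s+m:ℕ):ℝ)) * C)) := h1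
      _ = (2*Λ)^(k+1) * (∏ m ∈ Finset.range (k+1), ((s+m:ℕ):ℝ)) * C := by
          rw [Finset.prod_range_succ, pow_succ]
          push_cast
          ring

lemma Dop_cast (a b : ℕ) (h : a = b) (ψ : (Fin a → E) → ℝ) :
    Dop lam Γ b (fun w => ψ (fun i => w (Fin.cast h i)))
      = fun w => Dop lam Γ a ψ (fun i : Fin (a+1) => w (Fin.cast (by rw [h]) i)) := by
  subst h
  simp only [Fin.cast_refl]
  rfl

lemma Dpow_shift (k : ℕ) : ∀ (s : ℕ) (φ : (Fin s → E) → ℝ),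
    Dpow lam Γ (k+1) s φ
      = fun w : Fin (s+(k+1)) → E => Dpow lam Γ k (s+1) (Dop lam Γ s φ)
          (fun i : Fin (s+1+k) => w (Fin.cast (by omega) i)) := by
  induction k with
  | zero =>
    intro s φ
    funext w
    show Dop lam Γ s φ w = Dop lam Γ s φ _
    congr 1
  | succ k ih =>
    intro s φ
    show Dop lam Γ (s+(k+1)) (Dpow lam Γ (k+1) s φ) = _
    rw [ih s φ]
    rw [Dop_cast (s+1+k) (s+(k+1)) (by omega) (Dpow lam Γ k (s+1) (Dop lam Γ s φ))]
    rfl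

lemma Dpow_shift_apply (k s : ℕ) (φ : (Fin s → E) → ℝ) {N : ℕ}
    (h1 : s+1+k ≤ N) (h2 : s+(k+1) ≤ N) (z : Fin N → E) :
    Dpow lam Γ k (s+1) (Dop lam Γ s φ) (fun i => z (Fin.castLE h1 i))
      = Dpow lam Γ (k+1) s φ (fun i => z (Fin.castLE h2 i)) := by
  rw [Dpow_shift]
  congr 1

lemma fact_prod (s : ℕ) (hs : 1 ≤ s) : ∀ k : ℕ,
    (Nat.factorial (s-1)) * (∏ m ∈ Finset.range k, (s+m)) = Nat.factorial (s+k-1) := by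
  intro k
  induction k with
  | zero => simp
  | succ k ih =>
    rw [Finset.prod_range_succ, ← mul_assoc, ih]
    have h1 : s + (k+1) - 1 = (s + k - 1) + 1 := by omega
    rw [h1, Nat.factorial_succ]
    have h2 : s + k - 1 + 1 = s + k := by omega
    rw [h2, mul_comm]

lemma prod_cast_eq (s : ℕ) (hs : 1 ≤ s) (k : ℕ) :
    (∏ m ∈ Finset.range k, ((s+m:ℕ):ℝ))
      = (Nat.factorial (s+k-1) : ℝ) / (Nat.factorial (s-1) : ℝ) := by
  have h := fact_prod s hs k
  have hpos : (0:ℝ) < (Nat.factorial (s-1) : ℝ) := by exact_mod_cast Nat.factorial_pos _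
  rw [eq_div_iff (ne_of_gt hpos), mul_comm]
  exact_mod_cast h

lemma alpha_bounds {N s k : ℕ} (hN : 1 ≤ N) :
    0 ≤ (∏ m ∈ Finset.range k, ((N - s - m : ℕ):ℝ)) / (N:ℝ)^k
      ∧ (∏ m ∈ Finset.range k, ((N - s - m : ℕ):ℝ)) / (N:ℝ)^k ≤ 1 := by
  have hNpos : (0:ℝ) < (N:ℝ) := by exact_mod_cast hN
  have hprod_nonneg : (0:ℝ) ≤ ∏ m ∈ Finset.range k, ((N - s - m : ℕ):ℝ) :=
    Finset.prod_nonneg fun m _ => by positivity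
  constructor
  · positivity
  · rw [div_le_one (by positivity)]
    calc ∏ m ∈ Finset.range k, ((N - s - m : ℕ):ℝ) ≤ ∏ m ∈ Finset.range k, (N:ℝ) := by
          refine Finset.prod_le_prod (fun m _ => by positivity) fun m _ => ?_
          exact_mod_cast Nat.sub_le _ _ |>.trans (Nat.sub_le _ _)
      _ = (N:ℝ)^k := by rw [Finset.prod_const, Finset.card_range]

lemma alpha_step {N s k : ℕ} (h : s + (k+1) ≤ N) :
    (((N:ℝ) - s)/N) * ((∏ m ∈ Finset.range k, ((N - (s+1) - m : ℕ):ℝ)) / (N:ℝ)^k)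
      = (∏ m ∈ Finset.range (k+1), ((N - s - m : ℕ):ℝ)) / (N:ℝ)^(k+1) := by
  have hN : (0:ℝ) < (N:ℝ) := by
    have : (0:ℕ) < N := by omega
    exact_mod_cast this
  have h0 : ((N - s - 0 : ℕ):ℝ) = (N:ℝ) - s := by
    have e : (N - s - 0 : ℕ) = N - s := rfl
    rw [e, Nat.cast_sub (by omega)]
  rw [Finset.prod_range_succ']
  rw [show ∏ m ∈ Finset.range k, ((N - s - (m+1) : ℕ):ℝ)
      = ∏ m ∈ Finset.range k, ((N - (s+1) - m:ℕ):ℝ) from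
    Finset.prod_congr rfl fun m _ => by congr 1; omega, h0]
  field_simp
  ring

lemma abs_integral_le {α : Type*} [MeasurableSpace α] {μ : Measure α} [IsProbabilityMeasure μ]
    {g : α → ℝ} {C : ℝ} (hb : ∀ x, |g x| ≤ C) : |∫ x, g x ∂μ| ≤ C := by
  rw [← Real.norm_eq_abs]
  calc ‖∫ x, g x ∂μ‖ ≤ C * (μ Set.univ).toReal := by
        refine norm_integral_le_of_norm_le_const ?_
        filter_upwards with x
        rw [Real.norm_eq_abs]; exact hb x
    _ = C := by simp
set_option maxHeartbeats 1200000 in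
lemma main_induction [IsMarkovKernel Γ] (hΛ : 0 < Λ) (hlam : Measurable lam)
    (hln : ∀ z, 0 ≤ lam z) (hll : ∀ z, lam z ≤ Λ)
    (hls : ∀ a b : E, lam (a, b) = lam (b, a))
    (hΓs : ∀ a b : E, Γ (a, b) = (Γ (b, a)).map Prod.swap)
    {N : ℕ} (f₀ : Measure (Fin N → E)) [IsProbabilityMeasure f₀]
    (hsym : ∀ σ : Equiv.Perm (Fin N), f₀.map (fun x => x ∘ σ) = f₀) :
    ∀ (k s : ℕ), 1 ≤ s → ∀ (hsk : s + k ≤ N) (φ : (Fin s → E) → ℝ),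
      Measurable φ → ∀ (C : ℝ), 0 ≤ C → (∀ y, |φ y| ≤ C) →
    ∃ u : ℝ,
      |u| ≤ (2*Λ)^k * C * ((Nat.factorial (s+k-2) : ℝ) / (Nat.factorial (s-1) : ℝ))
              * (∑ ℓ ∈ Finset.range k, ((s+ℓ:ℕ):ℝ)^2) / 2
      ∧ ∫ z, (kacGen lam Γ N)^[k] (extN (le_trans (Nat.le_add_right s k) hsk) φ) z ∂f₀
          = u / N
            + ((∏ m ∈ Finset.range k, ((N - s - m : ℕ):ℝ)) / (N:ℝ)^k)
              * ∫ z, Dpow lam Γ k s φ (fun i => z (Fin.castLE hsk i)) ∂f₀ := by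
  intro k
  induction k with
  | zero =>
    intro s hs hsk φ hφm C hC hb
    refine ⟨0, by simp, ?_⟩
    simp only [Function.iterate_zero, id_eq, Finset.range_zero, Finset.prod_empty, pow_zero,
      zero_div, zero_add]
    norm_num
    rfl
  | succ k ih =>
    intro s hs hsk φ hφm C hC hb
    have ht : s < N := by omega
    have hskk : s + k ≤ N := by omega
    have hskk1 : (s+1) + k ≤ N := by omega
    have hΛ0 : 0 ≤ Λ := le_of_lt hΛ
    have hGφ : Good φ := ⟨hφm, C, hC, hb⟩
    have hs1 : (1:ℝ) ≤ (s:ℝ) := by exact_mod_cast hs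
    have hNpos : (0:ℝ) < (N:ℝ) := by
      have : (0:ℕ) < N := by omega
      exact_mod_cast this
    -- apply IH to B
    have hBmeas : Measurable (Bfun lam Γ s φ) := (Good.Bfun hΛ0 hlam hln hll hGφ).1
    have hCB : (0:ℝ) ≤ ((s:ℝ) * ((s:ℝ)-1) / 2) * (2*Λ*C) := by
      have h1 : (0:ℝ) ≤ (s:ℝ) - 1 := by linarith
      have h2 : (0:ℝ) ≤ 2*Λ*C := by positivity
      have h3 : (0:ℝ) ≤ (s:ℝ) * ((s:ℝ)-1) / 2 :=
        div_nonneg (mul_nonneg (by positivity) h1) (by norm_num)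
      exact mul_nonneg h3 h2
    have hBbdd : ∀ y, |Bfun lam Γ s φ y| ≤ ((s:ℝ) * ((s:ℝ)-1) / 2) * (2*Λ*C) :=
      fun y => Bfun_bdd hΛ0 hln hll hC hb y
    obtain ⟨uB, huB, eqB⟩ := ih s hs hskk (Bfun lam Γ s φ) hBmeas _ hCB hBbdd
    -- apply IH to D
    have hDmeas : Measurable (Dop lam Γ s φ) := (good_Dop hΛ0 hlam hln hll hGφ).1
    have hCD : (0:ℝ) ≤ (s:ℝ) * (2*Λ*C) := by positivity
    have hDbdd : ∀ y, |Dop lam Γ s φ y| ≤ (s:ℝ) * (2*Λ*C) :=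
      fun y => Dop_bdd hΛ0 hln hll hb y
    obtain ⟨uD, huD, eqD⟩ := ih (s+1) (by omega) hskk1 (Dop lam Γ s φ) hDmeas _ hCD hDbdd
    -- the step identity
    have hstep := step_integral hΛ0 hlam hln hll hls hΓs f₀ hsym ht hGφ k
    -- abbreviations
    set αk : ℝ := (∏ m ∈ Finset.range k, ((N - s - m : ℕ):ℝ)) / (N:ℝ)^k with hαk
    set αk1 : ℝ := (∏ m ∈ Finset.range k, ((N - (s+1) - m : ℕ):ℝ)) / (N:ℝ)^k with hαk1
    set JB : ℝ := ∫ z, Dpow lam Γ k s (Bfun lam Γ s φ) (fun i => z (Fin.castLE hskk i)) ∂f₀ with hJB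
    set JD : ℝ := ∫ z, Dpow lam Γ k (s+1) (Dop lam Γ s φ) (fun i => z (Fin.castLE hskk1 i)) ∂f₀
      with hJD
    have eqB' : ∫ z, (kacGen lam Γ N)^[k] (extN (le_of_lt ht) (Bfun lam Γ s φ)) z ∂f₀
        = uB / N + αk * JB := eqB
    have eqD' : ∫ z, (kacGen lam Γ N)^[k]
          (extN (Nat.succ_le_of_lt ht) (Dop lam Γ s φ)) z ∂f₀
        = uD / N + αk1 * JD := eqD
    have hJDeq : JD = ∫ z, Dpow lam Γ (k+1) s φ (fun i => z (Fin.castLE hsk i)) ∂f₀ := by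
      rw [hJD]
      exact congrArg (MeasureTheory.integral f₀)
        (funext fun z => Dpow_shift_apply k s φ hskk1 hsk z)
    refine ⟨uB / N + αk * JB + (((N:ℝ) - s)/N) * uD, ?_, ?_⟩
    · -- the bound
      rw [show s + (k+1) - 2 = s + k - 1 from by omega]
      have hfact0 : (0:ℝ) < (Nat.factorial (s-1) : ℝ) := by exact_mod_cast Nat.factorial_pos _
      have hfacts : (0:ℝ) < (Nat.factorial s : ℝ) := by exact_mod_cast Nat.factorial_pos _
      rw [show (s+1) + k - 2 = s + k - 1 from by omega, show (s+1) - 1 = s from by omega] at huD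
      set a : ℝ := (2*Λ)^k with ha
      have ha0 : 0 ≤ a := by positivity
      set w : ℝ := 2*Λ*C with hw
      have hw0 : 0 ≤ w := by positivity
      set G : ℝ := (Nat.factorial (s+k-2) : ℝ) / (Nat.factorial (s-1) : ℝ) with hG
      set R : ℝ := (Nat.factorial (s+k-1) : ℝ) / (Nat.factorial (s-1) : ℝ) with hR
      set Q : ℝ := (Nat.factorial (s+k-1) : ℝ) / (Nat.factorial s : ℝ) with hQ
      set S0 : ℝ := ∑ ℓ ∈ Finset.range k, ((s+ℓ:ℕ):ℝ)^2 with hS0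
      set S1 : ℝ := ∑ ℓ ∈ Finset.range k, (((s+1)+ℓ:ℕ):ℝ)^2 with hS1
      have hG0 : 0 ≤ G := by rw [hG]; positivity
      have hR0 : 0 ≤ R := by rw [hR]; positivity
      have hS00 : 0 ≤ S0 := Finset.sum_nonneg fun ℓ _ => by positivity
      have hS10 : 0 ≤ S1 := Finset.sum_nonneg fun ℓ _ => by positivity
      have hSle : S0 ≤ S1 := by
        refine Finset.sum_le_sum fun ℓ _ => ?_
        have h1 : ((s+ℓ:ℕ):ℝ) ≤ (((s+1)+ℓ:ℕ):ℝ) := by exact_mod_cast (by omega : s+ℓ ≤ (s+1)+ℓ)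
        have h2 : (0:ℝ) ≤ ((s+ℓ:ℕ):ℝ) := by positivity
        nlinarith
      have hStot : ∑ ℓ ∈ Finset.range (k+1), ((s+ℓ:ℕ):ℝ)^2 = ((s:ℝ))^2 + S1 := by
        rw [Finset.sum_range_succ']
        rw [show ∑ ℓ ∈ Finset.range k, ((s+(ℓ+1):ℕ):ℝ)^2 = S1 from
          Finset.sum_congr rfl fun ℓ _ => by rw [show s+(ℓ+1) = (s+1)+ℓ from by omega]]
        rw [show ((s+0:ℕ):ℝ) = (s:ℝ) from by norm_num]
        ring
      rw [hStot]
      -- bound on JB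
      have hDPB := Dpow_bdd (Γ := Γ) hΛ0 hln hll k s (Bfun lam Γ s φ) (((s:ℝ) * ((s:ℝ)-1) / 2) * (2*Λ*C)) hCB hBbdd
      have hJBb : |JB| ≤ a * R * ((s:ℝ) * ((s:ℝ)-1) / 2 * w) := by
        rw [hJB]
        have := abs_integral_le (μ := f₀)
          (g := fun z : Fin N → E => Dpow lam Γ k s (Bfun lam Γ s φ)
            (fun i => z (Fin.castLE hskk i)))
          (C := (2*Λ)^k * (∏ m ∈ Finset.range k, ((s+m:ℕ):ℝ)) * ((s:ℝ) * ((s:ℝ)-1) / 2 * (2*Λ*C)))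
          (fun z => hDPB _)
        rw [prod_cast_eq s hs k] at this
        calc |∫ z, Dpow lam Γ k s (Bfun lam Γ s φ) (fun i => z (Fin.castLE hskk i)) ∂f₀|
            ≤ (2*Λ)^k * ((Nat.factorial (s+k-1) : ℝ) / (Nat.factorial (s-1) : ℝ))
              * ((s:ℝ) * ((s:ℝ)-1) / 2 * (2*Λ*C)) := this
          _ = a * R * ((s:ℝ) * ((s:ℝ)-1) / 2 * w) := by rw [ha, hR, hw]
      -- alpha and coefficient bounds
      obtain ⟨hα0, hα1⟩ := alpha_bounds (N := N) (s := s) (k := k) (by omega)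
      have hsN : (s:ℝ) ≤ (N:ℝ) := by exact_mod_cast (by omega : s ≤ N)
      have hc0 : (0:ℝ) ≤ ((N:ℝ) - s)/N := by
        apply div_nonneg _ (le_of_lt hNpos)
        linarith
      -- |u| ≤ |uB|/N + αk * |JB| + c * |uD|
      have habs : |uB / N + αk * JB + (((N:ℝ) - s)/N) * uD|
          ≤ |uB|/N + αk * |JB| + (((N:ℝ) - s)/N) * |uD| := by
        have h1 := abs_add_le (uB / N + αk * JB) ((((N:ℝ) - s)/N) * uD)
        have h2 := abs_add_le (uB / N) (αk * JB)
        have e1 : |uB / N| = |uB| / N := by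
          rw [abs_div, abs_of_nonneg (le_of_lt hNpos)]
        have e2 : |αk * JB| = αk * |JB| := by
          rw [abs_mul, abs_of_nonneg hα0]
        have e3 : |(((N:ℝ) - s)/N) * uD| = (((N:ℝ) - s)/N) * |uD| := by
          rw [abs_mul, abs_of_nonneg hc0]
        linarith [h1, h2, e1, e2, e3, abs_nonneg (αk * JB), abs_nonneg (uB/N)]
      -- key fact : s * Q = R
      have hFs : (Nat.factorial s : ℝ) = (s:ℝ) * (Nat.factorial (s-1) : ℝ) := by
        have h := Nat.mul_factorial_pred (n := s) (by omega)
        exact_mod_cast h.symm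
      have hsne : (s:ℝ) ≠ 0 := by positivity
      have hQR : (s:ℝ) * Q = R := by
        rw [hQ, hR, hFs]
        field_simp
      -- key inequality
      have hkey : ((s:ℝ)-1) * (G * S0) ≤ 2 * (R * S1) := by
        rcases Nat.eq_zero_or_pos k with hk0 | hk1
        · have : S0 = 0 := by rw [hS0, hk0]; simp
          rw [this]
          have : (0:ℝ) ≤ 2 * (R * S1) := by positivity
          linarith [mul_nonneg hR0 hS10]
        · have hRG : R = ((s+k-1:ℕ):ℝ) * G := by
            rw [hR, hG, show s+k-1 = (s+k-2)+1 from by omega, Nat.factorial_succ]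
            push_cast
            ring
          have hcast : (s:ℝ) - 1 ≤ 2 * ((s+k-1:ℕ):ℝ) := by
            have h1 : ((s-1:ℕ):ℝ) ≤ ((s+k-1:ℕ):ℝ) := by
              exact_mod_cast (by omega : s-1 ≤ s+k-1)
            have h2 : ((s-1:ℕ):ℝ) = (s:ℝ) - 1 := by
              rw [Nat.cast_sub hs]; norm_num
            have h3 : (0:ℝ) ≤ ((s+k-1:ℕ):ℝ) := by positivity
            linarith
          have hGS : G * S0 ≤ G * S1 := mul_le_mul_of_nonneg_left hSle hG0
          have hGS1 : (0:ℝ) ≤ G * S1 := mul_nonneg hG0 hS10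
          calc ((s:ℝ)-1) * (G * S0) ≤ ((s:ℝ)-1) * (G * S1) :=
                mul_le_mul_of_nonneg_left hGS (by linarith)
            _ ≤ (2 * ((s+k-1:ℕ):ℝ)) * (G * S1) := mul_le_mul_of_nonneg_right hcast hGS1
            _ = 2 * (R * S1) := by rw [hRG]; ring
      -- assemble
      have hBDeq : a * ((s:ℝ) * w) * Q * S1 / 2 = a * w * R * S1 / 2 := by
        rw [← hQR]; ring
      have huD2 : |uD| ≤ a * w * R * S1 / 2 := le_of_le_of_eq huD hBDeq
      have hBB : a * ((s:ℝ) * ((s:ℝ)-1) / 2 * w) * G * S0 / 2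
          ≤ (s:ℝ) * (a * w * R * S1 / 2) := by
        calc a * ((s:ℝ) * ((s:ℝ)-1) / 2 * w) * G * S0 / 2
            = (a*w*(s:ℝ)/4) * (((s:ℝ)-1) * (G * S0)) := by ring
          _ ≤ (a*w*(s:ℝ)/4) * (2 * (R * S1)) :=
              mul_le_mul_of_nonneg_left hkey (by positivity)
          _ = (s:ℝ) * (a * w * R * S1 / 2) := by ring
      have hT1 : |uB|/N ≤ ((s:ℝ) * (a * w * R * S1 / 2))/N :=
        (div_le_div_iff_of_pos_right hNpos).mpr (le_trans huB hBB)
      have hT2 : αk * |JB| ≤ a * w * R * (s:ℝ)^2 / 2 := by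
        have h6 : αk * |JB| ≤ 1 * (a * R * ((s:ℝ) * ((s:ℝ)-1) / 2 * w)) :=
          mul_le_mul hα1 hJBb (abs_nonneg _) zero_le_one
        have h8 : (0:ℝ) ≤ a * w * R * (s:ℝ) / 2 := by positivity
        have h7 : a * R * ((s:ℝ) * ((s:ℝ)-1) / 2 * w) ≤ a * w * R * (s:ℝ)^2 / 2 := by
          calc a * R * ((s:ℝ) * ((s:ℝ)-1) / 2 * w) = (a*w*R*(s:ℝ)/2) * ((s:ℝ)-1) := by ring
            _ ≤ (a*w*R*(s:ℝ)/2) * (s:ℝ) := mul_le_mul_of_nonneg_left (by linarith) h8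
            _ = a * w * R * (s:ℝ)^2 / 2 := by ring
        linarith
      have hT3 : (((N:ℝ) - s)/N) * |uD| ≤ (((N:ℝ) - s)/N) * (a * w * R * S1 / 2) :=
        mul_le_mul_of_nonneg_left huD2 hc0
      have hNne : (N:ℝ) ≠ 0 := ne_of_gt hNpos
      have hceq : ((s:ℝ)*(a*w*R*S1/2))/N + (((N:ℝ)-s)/N)*(a*w*R*S1/2) = a*w*R*S1/2 := by
        field_simp
        ring
      have hrhs : (2*Λ)^(k+1) * C * R * (((s:ℝ))^2 + S1) / 2
          = a*w*R*((s:ℝ))^2/2 + a*w*R*S1/2 := by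
        rw [ha, hw, pow_succ]
        ring
      have hfin : |uB|/N + αk * |JB| + (((N:ℝ) - s)/N) * |uD|
          ≤ (2*Λ)^(k+1) * C * R * (((s:ℝ))^2 + S1) / 2 := by
        linarith
      exact le_trans habs hfin
    · -- the identity
      have hgoal : ∫ z, (kacGen lam Γ N)^[k+1]
            (extN (le_trans (Nat.le_add_right s (k+1)) hsk) φ) z ∂f₀
          = ∫ z, (kacGen lam Γ N)^[k+1] (extN (le_of_lt ht) φ) z ∂f₀ := rfl
      rw [hgoal, hstep, eqB', eqD', ← hJDeq, ← alpha_step (N := N) (s := s) (k := k) hsk]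
      push_cast
      ring
end Kac
/-- **The key combinatorial estimate in the proof of Kac's theorem**: for a bounded collision
rate `λ ≤ Λ` and a symmetric Markovian post-collisional kernel `Γ`, for `s + k ≤ N`,
`⟨f₀^N, 𝓛_N^k φ_s⟩ = u/N + α_N^{(s,k)} ⟨f₀^{s+k,N}, D^k φ_s⟩` with
`|u| ≤ C^k ‖φ_s‖_∞ ((s+k−2)!/(s−1)!) ∑_{ℓ<k}(s+ℓ)²`, where one may take `C = 2Λ`. -/
theorem kac_series_expansion_estimate
    (Λ : ℝ) (hΛ : 0 < Λ)
    (lam : E × E → ℝ) (hlam_meas : Measurable lam)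
    (hlam_nonneg : ∀ z, 0 ≤ lam z) (hlam_le : ∀ z, lam z ≤ Λ)
    (hlam_symm : ∀ z₁ z₂ : E, lam (z₁, z₂) = lam (z₂, z₁))
    (Γ : Kernel (E × E) (E × E)) [IsMarkovKernel Γ]
    (hΓ_symm : ∀ z₁ z₂ : E, Γ (z₁, z₂) = (Γ (z₂, z₁)).map Prod.swap)
    {N : ℕ} (f₀ : Measure (Fin N → E)) [IsProbabilityMeasure f₀]
    (hsym : ∀ σ : Equiv.Perm (Fin N), f₀.map (fun x => x ∘ σ) = f₀)
    (s k : ℕ) (hs : 1 ≤ s) (hk : 1 ≤ k) (hskN : s + k ≤ N)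
    (φ : (Fin s → E) → ℝ) (hφ_meas : Measurable φ)
    (M : ℝ) (hφ_bdd : ∀ z, |φ z| ≤ M) :
    ∃ u : ℝ,
      |u| ≤ (2 * Λ) ^ k * M
              * ((Nat.factorial (s + k - 2) : ℝ) / (Nat.factorial (s - 1) : ℝ))
              * ∑ ℓ ∈ Finset.range k, ((s + ℓ : ℕ) : ℝ) ^ 2
      ∧ ∫ z, (kacGen lam Γ N)^[k]
            (fun w => φ (fun i => w (Fin.castLE (le_trans (Nat.le_add_right s k) hskN) i))) z ∂f₀
          = u / N
            + ((∏ m ∈ Finset.range k, ((N - s - m : ℕ) : ℝ)) / (N : ℝ) ^ k)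
              * ∫ z, Dpow lam Γ k s φ z
                  ∂(f₀.map fun w (i : Fin (s + k)) => w (Fin.castLE hskN i)) := by
  classical
  have hN0 : 0 < N := by omega
  have hne : Nonempty (Fin N → E) := by
    by_contra h
    rw [not_nonempty_iff] at h
    exact (IsProbabilityMeasure.ne_zero f₀) (f₀.eq_zero_of_isEmpty)
  obtain ⟨z0⟩ := hne
  have hM0 : 0 ≤ M := le_trans (abs_nonneg _) (hφ_bdd (fun _ => z0 ⟨0, hN0⟩))
  obtain ⟨u, hu, heq⟩ := Kac.main_induction hΛ hlam_meas hlam_nonneg hlam_le hlam_symm hΓ_symm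
    f₀ hsym k s hs hskN φ hφ_meas M hM0 hφ_bdd
  refine ⟨u, ?_, ?_⟩
  · have hX : (0:ℝ) ≤ (2 * Λ) ^ k * M
        * ((Nat.factorial (s + k - 2) : ℝ) / (Nat.factorial (s - 1) : ℝ))
        * ∑ ℓ ∈ Finset.range k, ((s + ℓ : ℕ) : ℝ) ^ 2 := by
      have h1 : (0:ℝ) ≤ ∑ ℓ ∈ Finset.range k, ((s + ℓ : ℕ) : ℝ) ^ 2 :=
        Finset.sum_nonneg fun ℓ _ => by positivity
      positivity
    linarith
  · have hGφ : Kac.Good φ := ⟨hφ_meas, M, hM0, hφ_bdd⟩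
    have hDm : Measurable (Dpow lam Γ k s φ) :=
      (Kac.good_Dpow (le_of_lt hΛ) hlam_meas hlam_nonneg hlam_le k s hGφ).1
    have hgm : Measurable (fun w : Fin N → E => (fun i : Fin (s+k) => w (Fin.castLE hskN i))) :=
      measurable_pi_lambda _ fun i => measurable_pi_apply _
    rw [MeasureTheory.integral_map hgm.aemeasurable hDm.aestronglyMeasurable]
    exact heq
end
end

section
/- Let E be a set and let L be an ℝ-linear map from real-valued functions on E to real-valued functions on E which vanishes on constant functions. Let N ≥ 1 and φ¹, φ² : E → ℝ. Then for every x = (x¹,…,x^N) ∈ E^N, ∑_{i=1}^N (L ⋄_i Ψ)(x) = ⟨μ_x, Lφ¹⟩⟨μ_x, φ²⟩ + ⟨μ_x, φ¹⟩⟨μ_x, Lφ²⟩ + (1/N)⟨μ_x, Γ_L(φ¹, φ²)⟩, where Ψ : E^N → ℝ is the function Ψ(y) := ⟨μ_y, φ¹⟩⟨μ_y, φ²⟩ and Γ_L(φ¹,φ²) := L(φ¹φ²) − φ¹·L(φ²) − φ²·L(φ¹) is the carré du champ operator of L. -/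
noncomputable section

variable {E : Type*}

/-- Empirical measure pairing `⟨μ_x, φ⟩ = (1/N) ∑ᵢ φ(xⁱ)`. -/
def empAvg {N : ℕ} (x : Fin N → E) (φ : E → ℝ) : ℝ := (∑ i, φ (x i)) / N

/-- Slotwise action `(L ⋄ᵢ ψ)(x) = L[u ↦ ψ(x¹,…,u,…,x^N)](xⁱ)`. -/
def slot {N : ℕ} (L : (E → ℝ) → (E → ℝ)) (i : Fin N)
    (ψ : (Fin N → E) → ℝ) (x : Fin N → E) : ℝ :=
  L (fun u => ψ (Function.update x i u)) (x i)

/-- **Quadratic generator estimate for mean-field generators.** For an ℝ-linear operator `L`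
vanishing on constants, the mean-field generator applied to the degree-2 monomial
`y ↦ ⟨μ_y,φ¹⟩⟨μ_y,φ²⟩` equals the expected limit terms plus a `1/N` carré-du-champ correction. -/
theorem meanfield_quadratic_generator_estimate
    (L : (E → ℝ) →ₗ[ℝ] (E → ℝ))
    (hconst : ∀ c : ℝ, L (fun _ => c) = 0)
    {N : ℕ} (hN : 1 ≤ N) (φ₁ φ₂ : E → ℝ) (x : Fin N → E) :
    ∑ i : Fin N, slot (⇑L) i (fun y => empAvg y φ₁ * empAvg y φ₂) x
      = empAvg x (L φ₁) * empAvg x φ₂ + empAvg x φ₁ * empAvg x (L φ₂)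
        + (1 / N : ℝ) * empAvg x (fun y =>
            L (fun u => φ₁ u * φ₂ u) y - φ₁ y * L φ₂ y - φ₂ y * L φ₁ y) := by
  have hN0 : (N : ℝ) ≠ 0 := Nat.cast_ne_zero.mpr (by omega)
  have hupd : ∀ (i : Fin N) (u : E) (φ : E → ℝ),
      empAvg (Function.update x i u) φ = ((∑ j, φ (x j)) - φ (x i) + φ u) / N := by
    intro i u φ
    unfold empAvg
    congr 1
    have h1 : ∑ j, φ (Function.update x i u j)
        = ∑ j, Function.update (fun j => φ (x j)) i (φ u) j := by
      apply Finset.sum_congr rfl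
      intro j _
      by_cases h : j = i
      · subst h; simp
      · simp [Function.update_of_ne h]
    rw [h1, Finset.sum_update_of_mem (Finset.mem_univ i)]
    have h2 : ∑ j ∈ Finset.univ \ {i}, φ (x j) = (∑ j, φ (x j)) - φ (x i) := by
      have := Finset.sum_eq_sum_sdiff_singleton_add (Finset.mem_univ i) (fun j => φ (x j))
      linarith
    rw [h2]; ring
  have hslot : ∀ i : Fin N, slot (⇑L) i (fun y => empAvg y φ₁ * empAvg y φ₂) x
      = ((∑ j, φ₁ (x j)) * L φ₂ (x i) - φ₁ (x i) * L φ₂ (x i)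
          + (∑ j, φ₂ (x j)) * L φ₁ (x i) - φ₂ (x i) * L φ₁ (x i)
          + L (fun u => φ₁ u * φ₂ u) (x i)) / (N : ℝ)^2 := by
    intro i
    set c₁ : ℝ := ((∑ j, φ₁ (x j)) - φ₁ (x i)) / N with hc₁
    set c₂ : ℝ := ((∑ j, φ₂ (x j)) - φ₂ (x i)) / N with hc₂
    have hfun : (fun u => empAvg (Function.update x i u) φ₁ * empAvg (Function.update x i u) φ₂)
        = (fun _ => c₁ * c₂) + (c₁ / N) • φ₂ + (c₂ / N) • φ₁
            + ((1:ℝ)/(N:ℝ)^2) • (fun u => φ₁ u * φ₂ u) := by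
      funext u
      simp only [hupd, Pi.add_apply, Pi.smul_apply, smul_eq_mul, hc₁, hc₂]
      field_simp
      ring
    unfold slot
    rw [hfun]
    simp only [map_add, map_smul, hconst, Pi.add_apply, Pi.smul_apply, smul_eq_mul,
      zero_add, Pi.zero_apply]
    rw [hc₁, hc₂]
    field_simp
    ring
  simp only [hslot]
  rw [← Finset.sum_div]
  simp only [Finset.sum_add_distrib, Finset.sum_sub_distrib, ← Finset.mul_sum]
  unfold empAvg
  simp only [Finset.sum_sub_distrib]
  field_simp
  ring
end
end

section
/- Let Λ > 0, T ≥ 0, and N > 0 be real numbers, and let (Q_q)_{q≥1} be a sequence of nonnegative measurable functions on [0,T] such that Q₁(t) ≤ Λt/N for all t ∈ [0,T], and for every q ≥ 2 and t ∈ [0,T], Q_q(t) ≤ ∫₀ᵗ Q_{q−1}(t−s)·2Λ·e^{−2Λs} ds. Then the series ∑_{q=1}^∞ Q_q(T) converges and ∑_{q=1}^∞ Q_q(T) ≤ (ΛT + Λ²T²)/N. -/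
open MeasureTheory intervalIntegral Real

/-- FTC computation: the convolution of `Λ(t-s) + Λ²(t-s)²` with the exponential
density `2Λ e^{-2Λs}` over `[0,t]` equals `Λ²t²`. -/
lemma conv_poly_exp (Λ t : ℝ) :
    (∫ s in (0:ℝ)..t, (Λ * (t - s) + Λ ^ 2 * (t - s) ^ 2) * (2 * Λ * Real.exp (-(2 * Λ) * s)))
      = Λ ^ 2 * t ^ 2 := by
  have key : ∀ s ∈ Set.uIcc (0:ℝ) t,
      HasDerivAt (fun s => -(Λ ^ 2 * ((t - s) ^ 2 * Real.exp (-(2 * Λ) * s))))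
        ((Λ * (t - s) + Λ ^ 2 * (t - s) ^ 2) * (2 * Λ * Real.exp (-(2 * Λ) * s))) s := by
    intro s _
    have h1 : HasDerivAt (fun s : ℝ => (t - s) ^ 2) (2 * (t - s) ^ 1 * (-1)) s :=
      ((hasDerivAt_id s).const_sub t).pow 2
    have h2 : HasDerivAt (fun s : ℝ => Real.exp (-(2 * Λ) * s))
        (Real.exp (-(2 * Λ) * s) * (-(2 * Λ))) s := by
      simpa using (((hasDerivAt_id s).const_mul (-(2 * Λ))).exp)
    have := ((h1.mul h2).const_mul (Λ ^ 2)).neg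
    refine this.congr_deriv ?_
    ring
  have hint : IntervalIntegrable
      (fun s => (Λ * (t - s) + Λ ^ 2 * (t - s) ^ 2) * (2 * Λ * Real.exp (-(2 * Λ) * s)))
      volume 0 t := by
    apply Continuous.intervalIntegrable
    fun_prop
  rw [intervalIntegral.integral_eq_sub_of_hasDerivAt key hint]
  simp

set_option maxHeartbeats 1000000 in
/-- **Route-probability bound for random interaction graphs.** If `Q₁(t) ≤ Λt/N` and each
`Q_q` is dominated by the convolution of `Q_{q-1}` with the exponential density of rate `2Λ`,
then `∑_{q≥1} Q_q(T) ≤ (ΛT + Λ²T²)/N`. -/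
theorem interaction_graph_route_bound
    (Λ T N : ℝ) (hΛ : 0 < Λ) (hT : 0 ≤ T) (hN : 0 < N)
    (Q : ℕ → ℝ → ℝ)
    (hmeas : ∀ q, 1 ≤ q → Measurable (Q q))
    (hnonneg : ∀ q, 1 ≤ q → ∀ t ∈ Set.Icc (0 : ℝ) T, 0 ≤ Q q t)
    (hQ1 : ∀ t ∈ Set.Icc (0 : ℝ) T, Q 1 t ≤ Λ * t / N)
    (hrec : ∀ q, 2 ≤ q → ∀ t ∈ Set.Icc (0 : ℝ) T,
      Q q t ≤ ∫ s in (0 : ℝ)..t, Q (q - 1) (t - s) * (2 * Λ * Real.exp (-(2 * Λ) * s))) :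
    Summable (fun q : ℕ => Q (q + 1) T) ∧
      ∑' q : ℕ, Q (q + 1) T ≤ (Λ * T + Λ ^ 2 * T ^ 2) / N := by
  set M : ℝ := (Λ * T + Λ ^ 2 * T ^ 2) / N with hM
  have hM0 : 0 ≤ M := by positivity
  -- membership lemma : if t ∈ [0,T] and s ∈ [0,t] then t - s ∈ [0,T]
  have hmem : ∀ t ∈ Set.Icc (0:ℝ) T, ∀ s ∈ Set.Icc (0:ℝ) t,
      t - s ∈ Set.Icc (0:ℝ) T := by
    rintro t ⟨ht0, htT⟩ s ⟨hs0, hst⟩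
    constructor <;> nlinarith
  -- uniform bound: Q q ≤ M on [0,T]
  have hbdd : ∀ q, 1 ≤ q → ∀ t ∈ Set.Icc (0:ℝ) T, Q q t ≤ M := by
    intro q hq
    induction q, hq using Nat.le_induction with
    | base =>
      intro t ht
      refine (hQ1 t ht).trans ?_
      rw [hM, div_le_div_iff_of_pos_right hN]
      nlinarith [ht.1, ht.2]
    | succ q hq ih =>
      intro t ht
      have ht0 : (0:ℝ) ≤ t := ht.1
      -- integrability of the small function
      have hsmall : IntervalIntegrable
          (fun s => Q q (t - s) * (2 * Λ * Real.exp (-(2 * Λ) * s))) volume 0 t := by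
        rw [intervalIntegrable_iff_integrableOn_Ioc_of_le ht0]
        apply Measure.integrableOn_of_bounded (M := M * (2 * Λ))
          (by simp [measure_Ioc_lt_top.ne])
        · exact (((hmeas q hq).comp (measurable_const.sub measurable_id)).mul
            (by fun_prop)).aestronglyMeasurable
        · filter_upwards [ae_restrict_mem measurableSet_Ioc] with s hs
          have hsIcc : s ∈ Set.Icc (0:ℝ) t := ⟨hs.1.le, hs.2⟩
          have hts := hmem t ht s hsIcc
          have h1 : 0 ≤ Q q (t - s) := hnonneg q hq _ hts
          have h2 : Q q (t - s) ≤ M := ih _ hts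
          have h3 : Real.exp (-(2 * Λ) * s) ≤ 1 := by
            apply Real.exp_le_one_iff.mpr
            nlinarith [hs.1.le]
          have h4 : (0:ℝ) < Real.exp (-(2 * Λ) * s) := Real.exp_pos _
          rw [Real.norm_eq_abs, abs_of_nonneg (by positivity)]
          calc Q q (t - s) * (2 * Λ * Real.exp (-(2 * Λ) * s))
              ≤ M * (2 * Λ * Real.exp (-(2 * Λ) * s)) :=
                mul_le_mul_of_nonneg_right h2 (by positivity)
            _ ≤ M * (2 * Λ) := mul_le_mul_of_nonneg_left (by nlinarith) hM0
      have hbig : IntervalIntegrable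
          (fun s => M * (2 * Λ * Real.exp (-(2 * Λ) * s))) volume 0 t := by
        apply Continuous.intervalIntegrable; fun_prop
      have hle := hrec (q + 1) (by omega) t ht
      simp only [Nat.add_sub_cancel] at hle
      refine hle.trans ?_
      have hmono : (∫ s in (0:ℝ)..t, Q q (t - s) * (2 * Λ * Real.exp (-(2 * Λ) * s)))
          ≤ ∫ s in (0:ℝ)..t, M * (2 * Λ * Real.exp (-(2 * Λ) * s)) := by
        apply intervalIntegral.integral_mono_on ht0 hsmall hbig
        intro s hs
        have hts := hmem t ht s hs
        have h2 : Q q (t - s) ≤ M := ih _ hts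
        exact mul_le_mul_of_nonneg_right h2 (by positivity)
      refine hmono.trans ?_
      -- compute ∫ M * 2Λ e^{-2Λ s} = M (1 - e^{-2Λt}) ≤ M
      have hcalc : (∫ s in (0:ℝ)..t, M * (2 * Λ * Real.exp (-(2 * Λ) * s)))
          = M * (1 - Real.exp (-(2 * Λ) * t)) := by
        have key : ∀ s ∈ Set.uIcc (0:ℝ) t,
            HasDerivAt (fun s => -(M * Real.exp (-(2 * Λ) * s)))
              (M * (2 * Λ * Real.exp (-(2 * Λ) * s))) s := by
          intro s _
          have h2 : HasDerivAt (fun s : ℝ => Real.exp (-(2 * Λ) * s))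
              (Real.exp (-(2 * Λ) * s) * (-(2 * Λ))) s := by
            simpa using (((hasDerivAt_id s).const_mul (-(2 * Λ))).exp)
          have := (h2.const_mul M).neg
          refine this.congr_deriv ?_
          ring
        rw [intervalIntegral.integral_eq_sub_of_hasDerivAt key hbig]
        simp only [mul_zero, Real.exp_zero]
        ring
      rw [hcalc]
      have h4 : (0:ℝ) < Real.exp (-(2 * Λ) * t) := Real.exp_pos _
      nlinarith
  -- interval integrability of each convolution term
  have hii : ∀ q, 1 ≤ q → ∀ t ∈ Set.Icc (0:ℝ) T, IntervalIntegrable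
      (fun s => Q q (t - s) * (2 * Λ * Real.exp (-(2 * Λ) * s))) volume 0 t := by
    intro q hq t ht
    rw [intervalIntegrable_iff_integrableOn_Ioc_of_le ht.1]
    apply Measure.integrableOn_of_bounded (M := M * (2 * Λ))
      (by simp [measure_Ioc_lt_top.ne])
    · exact (((hmeas q hq).comp (measurable_const.sub measurable_id)).mul
        (by fun_prop)).aestronglyMeasurable
    · filter_upwards [ae_restrict_mem measurableSet_Ioc] with s hs
      have hsIcc : s ∈ Set.Icc (0:ℝ) t := ⟨hs.1.le, hs.2⟩
      have hts := hmem t ht s hsIcc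
      have h1 : 0 ≤ Q q (t - s) := hnonneg q hq _ hts
      have h2 : Q q (t - s) ≤ M := hbdd q hq _ hts
      have h3 : Real.exp (-(2 * Λ) * s) ≤ 1 := by
        apply Real.exp_le_one_iff.mpr
        nlinarith [hs.1.le]
      have h4 : (0:ℝ) < Real.exp (-(2 * Λ) * s) := Real.exp_pos _
      rw [Real.norm_eq_abs, abs_of_nonneg (by positivity)]
      calc Q q (t - s) * (2 * Λ * Real.exp (-(2 * Λ) * s))
          ≤ M * (2 * Λ * Real.exp (-(2 * Λ) * s)) :=
            mul_le_mul_of_nonneg_right h2 (by positivity)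
        _ ≤ M * (2 * Λ) := mul_le_mul_of_nonneg_left (by nlinarith) hM0
  -- main induction: partial sums are bounded by (Λt + Λ²t²)/N
  have hmain : ∀ n : ℕ, ∀ t ∈ Set.Icc (0:ℝ) T,
      (∑ i ∈ Finset.range n, Q (i + 1) t) ≤ (Λ * t + Λ ^ 2 * t ^ 2) / N := by
    intro n
    induction n with
    | zero =>
      intro t ht
      simp only [Finset.range_zero, Finset.sum_empty]
      have := ht.1
      positivity
    | succ n ih =>
      intro t ht
      have ht0 : (0:ℝ) ≤ t := ht.1
      rw [Finset.sum_range_succ']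
      have hsum : (∑ i ∈ Finset.range n, Q (i + 1 + 1) t)
          ≤ ∫ s in (0:ℝ)..t, ((Λ * (t - s) + Λ ^ 2 * (t - s) ^ 2) / N)
              * (2 * Λ * Real.exp (-(2 * Λ) * s)) := by
        calc (∑ i ∈ Finset.range n, Q (i + 1 + 1) t)
            ≤ ∑ i ∈ Finset.range n,
                ∫ s in (0:ℝ)..t, Q (i + 1) (t - s) * (2 * Λ * Real.exp (-(2 * Λ) * s)) := by
              apply Finset.sum_le_sum
              intro i _
              have := hrec (i + 1 + 1) (by omega) t ht
              simp only [Nat.add_sub_cancel] at this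
              exact this
          _ = ∫ s in (0:ℝ)..t, ∑ i ∈ Finset.range n,
                Q (i + 1) (t - s) * (2 * Λ * Real.exp (-(2 * Λ) * s)) := by
              rw [intervalIntegral.integral_finset_sum]
              intro i _
              exact hii (i + 1) (by omega) t ht
          _ ≤ ∫ s in (0:ℝ)..t, ((Λ * (t - s) + Λ ^ 2 * (t - s) ^ 2) / N)
                * (2 * Λ * Real.exp (-(2 * Λ) * s)) := by
              have h1 : IntervalIntegrable (fun s => ∑ i ∈ Finset.range n,
                  Q (i + 1) (t - s) * (2 * Λ * Real.exp (-(2 * Λ) * s))) volume 0 t := by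
                rw [← Finset.sum_fn]
                exact IntervalIntegrable.sum _ (fun i _ => hii (i + 1) (by omega) t ht)
              have h2 : IntervalIntegrable
                  (fun s => ((Λ * (t - s) + Λ ^ 2 * (t - s) ^ 2) / N)
                    * (2 * Λ * Real.exp (-(2 * Λ) * s))) volume 0 t := by
                apply Continuous.intervalIntegrable; fun_prop
              have h3 : ∀ s ∈ Set.Icc (0:ℝ) t, (∑ i ∈ Finset.range n,
                  Q (i + 1) (t - s) * (2 * Λ * Real.exp (-(2 * Λ) * s)))
                  ≤ ((Λ * (t - s) + Λ ^ 2 * (t - s) ^ 2) / N)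
                    * (2 * Λ * Real.exp (-(2 * Λ) * s)) := by
                intro s hs
                have hts := hmem t ht s hs
                have hih := ih (t - s) hts
                rw [← Finset.sum_mul]
                exact mul_le_mul_of_nonneg_right hih
                  (by nlinarith [Real.exp_pos (-(2 * Λ) * s)])
              exact intervalIntegral.integral_mono_on ht0 h1 h2 h3
      have hcalc : (∫ s in (0:ℝ)..t, ((Λ * (t - s) + Λ ^ 2 * (t - s) ^ 2) / N)
              * (2 * Λ * Real.exp (-(2 * Λ) * s))) = Λ ^ 2 * t ^ 2 / N := by
        have : (fun s => ((Λ * (t - s) + Λ ^ 2 * (t - s) ^ 2) / N)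
              * (2 * Λ * Real.exp (-(2 * Λ) * s)))
            = fun s => (1 / N) * ((Λ * (t - s) + Λ ^ 2 * (t - s) ^ 2)
              * (2 * Λ * Real.exp (-(2 * Λ) * s))) := by
          funext s; ring
        rw [this, intervalIntegral.integral_const_mul, conv_poly_exp]
        ring
      rw [hcalc] at hsum
      have hq1 := hQ1 t ht
      have : (∑ i ∈ Finset.range n, Q (i + 1 + 1) t) + Q (0 + 1) t
          ≤ Λ ^ 2 * t ^ 2 / N + Λ * t / N := by
        simp only [Nat.zero_add]
        exact add_le_add hsum hq1
      refine this.trans ?_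
      rw [← add_div, div_le_div_iff_of_pos_right hN]
      ring_nf
      linarith
  have hTmem : T ∈ Set.Icc (0:ℝ) T := ⟨le_refl _ |>.trans' hT, le_refl _⟩
  have hpos : ∀ n : ℕ, 0 ≤ Q (n + 1) T := fun n => hnonneg (n + 1) (by omega) T hTmem
  have hbound : ∀ n : ℕ, (∑ i ∈ Finset.range n, Q (i + 1) T)
      ≤ (Λ * T + Λ ^ 2 * T ^ 2) / N := fun n => hmain n T hTmem
  exact ⟨summable_of_sum_range_le hpos hbound, Real.tsum_le_of_sum_range_le hpos hbound⟩
end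

section
/- Let (Ω, 𝓕, P) be a probability space, let p ≥ 2 be an integer, and let (A_n)_{n≥1} be an infinite sequence of events with P(A_n) > 1/p for every n. Then for every integer m ≥ 1 there exist indices i₁ < i₂ < ⋯ < i_m such that P(A_{i₁} ∩ A_{i₂} ∩ ⋯ ∩ A_{i_m}) > 0; that is, from such a sequence one can build non-negligible intersections involving an arbitrarily large number of the events A_n. -/
open MeasureTheory
open scoped ENNReal

/-- From an infinite sequence of events each of probability greater than `1/p`, one can
extract non-negligible intersections involving arbitrarily many of the events. -/
theorem arbitrarily_large_nonnegligible_intersections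
    {Ω : Type*} [MeasurableSpace Ω] (P : Measure Ω) [IsProbabilityMeasure P]
    (p : ℕ) (hp : 2 ≤ p)
    (A : ℕ → Set Ω) (hA : ∀ n, MeasurableSet (A n))
    (hlow : ∀ n, ((p : ℝ≥0∞))⁻¹ < P (A n)) :
    ∀ m : ℕ, 1 ≤ m → ∃ s : Finset ℕ, s.card = m ∧ 0 < P (⋂ i ∈ s, A i) := by
  intro m hm
  classical
  by_contra hcon
  push_neg at hcon
  have hzero : ∀ s : Finset ℕ, s.card = m → P (⋂ i ∈ s, A i) = 0 := fun s hs =>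
    le_antisymm (hcon s hs) zero_le
  set N := p * m with hN
  set 𝒮 := (Finset.range N).powersetCard m with h𝒮
  set E : Set Ω := ⋃ s ∈ 𝒮, ⋂ i ∈ s, A i with hE
  have hEnull : P E = 0 := by
    rw [hE]
    refine (measure_biUnion_null_iff (𝒮 : Set (Finset ℕ)).to_countable).mpr ?_
    intro s hs
    exact hzero s (Finset.mem_powersetCard.mp hs).2
  have hcount : ∀ ω, ω ∉ E →
      ((Finset.range N).filter (fun n => ω ∈ A n)).card ≤ m - 1 := by
    intro ω hω
    by_contra hlt
    push_neg at hlt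
    have hmle : m ≤ ((Finset.range N).filter (fun n => ω ∈ A n)).card := by omega
    obtain ⟨s, hs_sub, hs_card⟩ := Finset.exists_subset_card_eq hmle
    apply hω
    refine Set.mem_biUnion
      (Finset.mem_powersetCard.mpr ⟨hs_sub.trans (Finset.filter_subset _ _), hs_card⟩) ?_
    exact Set.mem_biInter fun i hi => (Finset.mem_filter.mp (hs_sub hi)).2
  have hsum_eq : ∑ n ∈ Finset.range N, P (A n)
      = ∫⁻ ω, ∑ n ∈ Finset.range N, (A n).indicator (1 : Ω → ℝ≥0∞) ω ∂P := by
    rw [lintegral_finset_sum _ (fun n _ => (measurable_one.indicator (hA n)))]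
    refine Finset.sum_congr rfl fun n _ => ?_
    rw [lintegral_indicator_one (hA n)]
  have hub : ∫⁻ ω, ∑ n ∈ Finset.range N, (A n).indicator (1 : Ω → ℝ≥0∞) ω ∂P
      ≤ ((m - 1 : ℕ) : ℝ≥0∞) := by
    have hae : ∀ᵐ ω ∂P, ∑ n ∈ Finset.range N, (A n).indicator (1 : Ω → ℝ≥0∞) ω
        ≤ ((m - 1 : ℕ) : ℝ≥0∞) := by
      filter_upwards [measure_eq_zero_iff_ae_notMem.mp hEnull] with ω hω
      have h1 : ∑ n ∈ Finset.range N, (A n).indicator (1 : Ω → ℝ≥0∞) ω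
          = (((Finset.range N).filter (fun n => ω ∈ A n)).card : ℝ≥0∞) := by
        simp [Set.indicator_apply, Finset.sum_boole]
      rw [h1]
      exact_mod_cast Nat.cast_le.mpr (hcount ω hω)
    calc ∫⁻ ω, ∑ n ∈ Finset.range N, (A n).indicator (1 : Ω → ℝ≥0∞) ω ∂P
        ≤ ∫⁻ _, ((m - 1 : ℕ) : ℝ≥0∞) ∂P := lintegral_mono_ae hae
      _ = ((m - 1 : ℕ) : ℝ≥0∞) := by simp
  have hlb : (m : ℝ≥0∞) ≤ ∑ n ∈ Finset.range N, P (A n) := by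
    have hp0 : (p : ℝ≥0∞) ≠ 0 := by exact_mod_cast (by omega : p ≠ 0)
    have hcast : (m : ℝ≥0∞) = ∑ _n ∈ Finset.range N, (p:ℝ≥0∞)⁻¹ := by
      rw [Finset.sum_const, Finset.card_range, nsmul_eq_mul, hN]
      push_cast
      rw [mul_comm (p:ℝ≥0∞), mul_assoc, ENNReal.mul_inv_cancel hp0 (by simp), mul_one]
    rw [hcast]
    exact Finset.sum_le_sum fun n _ => (hlow n).le
  have : (m : ℝ≥0∞) ≤ ((m - 1 : ℕ) : ℝ≥0∞) := hlb.trans (hsum_eq ▸ hub)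
  have : m ≤ m - 1 := Nat.cast_le.mp this
  omega
end

section
/- Let κ : [0, +∞) → ℝ be a continuous function with liminf_{r→+∞} κ(r) > 0, and let σ > 0. Then there exist a constant c₀ > 0 and an increasing, concave function f : [0,+∞) → [0,+∞) of class C² with f(0) = 0, f(r) > 0 for r > 0, and f′(r) ≤ 1 for all r ≥ 0, such that for every dimension d ≥ 1 the map d_f(x,y) := f(|x−y|) defines a metric on ℝ^d, and such that for all r ≥ 0, f″(r) − (1/4)·r·κ(r)·f′(r) ≤ −(c₀/(2σ²))·f(r). -/
open Filter

noncomputable def RCu (s : ℝ) : ℝ := (1 + s ^ 2) ^ (-(1/4) : ℝ)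
noncomputable def RCu' (s : ℝ) : ℝ := -(s/2) * (1 + s ^ 2) ^ (-(5/4) : ℝ)

lemma RC_base_pos (s : ℝ) : 0 < 1 + s ^ 2 := by positivity

lemma RCu_pos (s : ℝ) : 0 < RCu s := Real.rpow_pos_of_pos (RC_base_pos s) _

lemma RCu_le_one (s : ℝ) : RCu s ≤ 1 :=
  Real.rpow_le_one_of_one_le_of_nonpos (by nlinarith [sq_nonneg s]) (by norm_num)

lemma RCu_hasDerivAt (s : ℝ) : HasDerivAt RCu (RCu' s) s := by
  have h1 : HasDerivAt (fun s : ℝ => 1 + s ^ 2) (2 * s) s := by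
    simpa using (hasDerivAt_pow 2 s).const_add 1
  have h2 := (Real.hasDerivAt_rpow_const (x := 1 + s ^ 2) (p := (-(1/4) : ℝ))
    (Or.inl (ne_of_gt (RC_base_pos s)))).comp s h1
  refine h2.congr_deriv ?_
  unfold RCu'
  rw [show (-(1/4) - 1 : ℝ) = -(5/4) by norm_num]
  ring

lemma RCu'_nonpos {s : ℝ} (hs : 0 ≤ s) : RCu' s ≤ 0 := by
  have := Real.rpow_pos_of_pos (RC_base_pos s) (-(5/4) : ℝ)
  unfold RCu'
  nlinarith

lemma RCpow_anti {p : ℝ} (hp : p ≤ 0) {a b : ℝ} (ha : 0 ≤ a) (hab : a ≤ b) :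
    (1 + b ^ 2) ^ p ≤ (1 + a ^ 2) ^ p :=
  Real.rpow_le_rpow_of_nonpos (RC_base_pos a) (by nlinarith) hp

lemma RCu_add_two_mul (s : ℝ) : RCu s + 2 * s * RCu' s = (1 + s ^ 2) ^ (-(5/4) : ℝ) := by
  unfold RCu RCu'
  rw [show (-(1/4) : ℝ) = 1 + -(5/4) by norm_num, Real.rpow_add (RC_base_pos s), Real.rpow_one]
  ring

lemma RCu_continuous : Continuous RCu := by
  have : ∀ s : ℝ, (1 + s ^ 2 : ℝ) ≠ 0 := fun s => ne_of_gt (RC_base_pos s)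
  exact ((continuous_const.add (continuous_pow 2)).rpow_const (fun s => Or.inl (this s)))

lemma RCu'_continuous : Continuous RCu' := by
  have : ∀ s : ℝ, (1 + s ^ 2 : ℝ) ≠ 0 := fun s => ne_of_gt (RC_base_pos s)
  unfold RCu'
  exact Continuous.mul (by continuity)
    ((continuous_const.add (continuous_pow 2)).rpow_const (fun s => Or.inl (this s)))

set_option maxHeartbeats 1000000 in
/-- **Existence of the distorted distance for reflection coupling** (Eberle; Durmus et al.):
if `κ` is continuous on `[0,∞)` with `liminf_{r→∞} κ(r) > 0` and `σ > 0`, there exist `c₀ > 0`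
and an increasing concave `C²` function `f` with `f(0) = 0`, `f > 0` on `(0,∞)`, `f' ≤ 1`,
such that `d_f(x,y) = f(|x−y|)` is a metric on `ℝ^d` for every `d ≥ 1` and
`f''(r) − (1/4) r κ(r) f'(r) ≤ −(c₀/(2σ²)) f(r)` for all `r ≥ 0`. -/
theorem reflection_coupling_distance_existence
    (κ : ℝ → ℝ) (hκcont : ContinuousOn κ (Set.Ici 0))
    (hκliminf : 0 < Filter.liminf (fun r => (κ r : EReal)) Filter.atTop)
    (σ : ℝ) (hσ : 0 < σ) :
    ∃ c₀ > (0 : ℝ), ∃ f : ℝ → ℝ,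
      ContDiff ℝ 2 f ∧
      f 0 = 0 ∧
      (∀ r > (0 : ℝ), 0 < f r) ∧
      MonotoneOn f (Set.Ici 0) ∧
      ConcaveOn ℝ (Set.Ici 0) f ∧
      (∀ r ≥ (0 : ℝ), deriv f r ≤ 1) ∧
      (∀ d : ℕ, 1 ≤ d → ∀ x y z : EuclideanSpace ℝ (Fin d),
        (f ‖x - y‖ = 0 ↔ x = y) ∧ f ‖x - y‖ = f ‖y - x‖ ∧
          f ‖x - z‖ ≤ f ‖x - y‖ + f ‖y - z‖) ∧
      (∀ r ≥ (0 : ℝ),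
        deriv (deriv f) r - (1 / 4) * r * κ r * deriv f r ≤ -(c₀ / (2 * σ ^ 2)) * f r) := by
  classical
  -- Step 1: extract a threshold `R` beyond which `κ ≥ ε > 0`.
  obtain ⟨ε, hεpos, R, hR1, hRκ⟩ : ∃ ε > (0:ℝ), ∃ R ≥ (1:ℝ), ∀ r, R ≤ r → ε ≤ κ r := by
    obtain ⟨l, hl0, hll⟩ := exists_between hκliminf
    have hlt : l ≠ ⊤ := hll.ne_top
    have hlb : l ≠ ⊥ := by
      intro h; rw [h] at hl0; exact (not_lt_bot hl0)
    have hlcoe : ((l.toReal : ℝ) : EReal) = l := EReal.coe_toReal hlt hlb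
    have hεp : 0 < l.toReal := by
      have := hl0; rw [← hlcoe] at this; exact_mod_cast this
    have hev : ∀ᶠ r in atTop, l < (κ r : EReal) := eventually_lt_of_lt_liminf hll
    obtain ⟨R₀, hR₀⟩ := eventually_atTop.mp hev
    refine ⟨l.toReal, hεp, max R₀ 1, le_max_right _ _, fun r hr => ?_⟩
    have := hR₀ r (le_trans (le_max_left _ _) hr)
    rw [← hlcoe] at this
    exact_mod_cast this.le
  have hR0 : (0:ℝ) ≤ R := le_trans zero_le_one hR1
  -- Step 2: the weight functions.
  set j : ℝ → ℝ := fun t => max t 0 * max (-(κ (max t 0))) 0 with hj_def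
  have hjcont : Continuous j := by
    have h1 : Continuous fun t : ℝ => κ (max t 0) :=
      hκcont.comp_continuous (continuous_id.max continuous_const) fun t => le_max_right t 0
    exact (continuous_id.max continuous_const).mul (h1.neg.max continuous_const)
  have hj_nonneg : ∀ t, 0 ≤ j t := fun t => mul_nonneg (le_max_right _ _) (le_max_right _ _)
  have hj_eq : ∀ t, 0 ≤ t → j t = t * max (-(κ t)) 0 := by
    intro t ht
    simp only [hj_def, max_eq_left ht]
  have hj_big : ∀ t, R ≤ t → j t = 0 := by
    intro t ht
    have ht0 : 0 ≤ t := le_trans hR0 ht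
    have hκt : ε ≤ κ t := hRκ t ht
    rw [hj_eq t ht0, max_eq_right (by linarith), mul_zero]
  set H : ℝ → ℝ := fun s => ∫ t in (0:ℝ)..s, j t with hH_def
  have hH_deriv : ∀ s, HasDerivAt H (j s) s :=
    fun s => (hjcont.integral_hasStrictDerivAt 0 s).hasDerivAt
  have hH_mono : ∀ a b : ℝ, a ≤ b → H a ≤ H b := by
    intro a b hab
    have h1 : H a + ∫ t in a..b, j t = H b :=
      intervalIntegral.integral_add_adjacent_intervals
        (hjcont.intervalIntegrable 0 a) (hjcont.intervalIntegrable a b)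
    have h2 : 0 ≤ ∫ t in a..b, j t :=
      intervalIntegral.integral_nonneg hab fun x _ => hj_nonneg x
    linarith
  have hH0 : H 0 = 0 := intervalIntegral.integral_same
  have hH_nonneg : ∀ s, 0 ≤ s → 0 ≤ H s := by
    intro s hs
    have := hH_mono 0 s hs; linarith
  have hH_le : ∀ s, 0 ≤ s → H s ≤ H R := by
    intro s hs
    rcases le_total s R with h | h
    · exact hH_mono s R h
    · have h1 : H R + ∫ t in R..s, j t = H s :=
        intervalIntegral.integral_add_adjacent_intervals
          (hjcont.intervalIntegrable 0 R) (hjcont.intervalIntegrable R s)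
      have h2 : (∫ t in R..s, j t) = 0 := by
        have : Set.EqOn j (fun _ => (0:ℝ)) (Set.uIcc R s) := by
          intro t ht
          rw [Set.uIcc_of_le h] at ht
          exact hj_big t ht.1
        rw [intervalIntegral.integral_congr this, intervalIntegral.integral_zero]
      linarith
  set φ : ℝ → ℝ := fun s => Real.exp (-H s / 4) with hφ_def
  have hφ_pos : ∀ s, 0 < φ s := fun s => Real.exp_pos _
  have hφ_le_one : ∀ s, 0 ≤ s → φ s ≤ 1 := by
    intro s hs
    apply Real.exp_le_one_iff.mpr
    have := hH_nonneg s hs; linarith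
  set φinf : ℝ := Real.exp (-H R / 4) with hφinf_def
  have hφinf_pos : 0 < φinf := Real.exp_pos _
  have hφinf_le : ∀ s, 0 ≤ s → φinf ≤ φ s := by
    intro s hs
    apply Real.exp_le_exp.mpr
    have := hH_le s hs; linarith
  have hφ_deriv : ∀ s, HasDerivAt φ (φ s * (-(j s) / 4)) s := by
    intro s
    have := ((hH_deriv s).neg.div_const 4).exp
    simpa [hφ_def, neg_div, mul_comm] using this
  have hφcont : Continuous φ :=
    (Differentiable.continuous fun s => (hφ_deriv s).differentiableAt :)
  -- Step 3: the distorted distance `f` and its derivatives.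
  set g : ℝ → ℝ := fun s => φ s * RCu s with hg_def
  have hgcont : Continuous g := hφcont.mul RCu_continuous
  set g' : ℝ → ℝ := fun s => φ s * (-(j s) / 4) * RCu s + φ s * RCu' s with hg'_def
  have hg_deriv : ∀ s, HasDerivAt g (g' s) s := fun s => (hφ_deriv s).mul (RCu_hasDerivAt s)
  have hg'cont : Continuous g' :=
    ((hφcont.mul (hjcont.neg.div_const 4)).mul RCu_continuous).add (hφcont.mul RCu'_continuous)
  set f : ℝ → ℝ := fun r => ∫ t in (0:ℝ)..r, g t with hf_def
  have hf_deriv : ∀ r, HasDerivAt f (g r) r :=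
    fun r => (hgcont.integral_hasStrictDerivAt 0 r).hasDerivAt
  have hfcont : Continuous f :=
    (Differentiable.continuous fun r => (hf_deriv r).differentiableAt :)
  have hdf : deriv f = g := funext fun r => (hf_deriv r).deriv
  have hdg : deriv g = g' := funext fun r => (hg_deriv r).deriv
  have hf0 : f 0 = 0 := intervalIntegral.integral_same
  have hfC2 : ContDiff ℝ 2 f := by
    rw [show (2 : WithTop ℕ∞) = 1 + 1 by norm_num, contDiff_succ_iff_deriv]
    refine ⟨fun r => (hf_deriv r).differentiableAt, by simp, ?_⟩
    rw [hdf, contDiff_one_iff_deriv]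
    exact ⟨fun r => (hg_deriv r).differentiableAt, by rw [hdg]; exact hg'cont⟩
  have hg_pos : ∀ s, 0 < g s := fun s => mul_pos (hφ_pos s) (RCu_pos s)
  have hg_le_one : ∀ s, 0 ≤ s → g s ≤ 1 := by
    intro s hs
    have h1 := hφ_le_one s hs
    have h2 := RCu_le_one s
    have h3 := (RCu_pos s).le
    have h4 := (hφ_pos s).le
    calc g s = φ s * RCu s := rfl
      _ ≤ 1 * 1 := by apply mul_le_mul h1 h2 h3 zero_le_one
      _ = 1 := by ring
  have hf_smono : StrictMonoOn f (Set.Ici 0) := by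
    apply strictMonoOn_of_deriv_pos (convex_Ici 0) hfcont.continuousOn
    intro x _
    rw [hdf]; exact hg_pos x
  have hf_mono : MonotoneOn f (Set.Ici 0) := hf_smono.monotoneOn
  have hf_pos : ∀ r, 0 < r → 0 < f r := by
    intro r hr
    have := hf_smono (Set.self_mem_Ici) (Set.mem_Ici.mpr hr.le) hr
    rwa [hf0] at this
  have hf_nonneg : ∀ r, 0 ≤ r → 0 ≤ f r := by
    intro r hr
    rcases hr.lt_or_eq with h | h
    · exact (hf_pos r h).le
    · rw [← h, hf0]
  -- The key comparison `f r ≤ 2 r · u r` for `r ≥ 0`.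
  have hf_le : ∀ r, 0 ≤ r → f r ≤ 2 * r * RCu r := by
    set D : ℝ → ℝ := fun r => 2 * r * RCu r - f r with hD_def
    have hD_deriv : ∀ r, HasDerivAt D (2 * RCu r + 2 * r * RCu' r - g r) r := by
      intro r
      have p1 : HasDerivAt (fun r : ℝ => 2 * r * RCu r) (2 * RCu r + 2 * r * RCu' r) r := by
        have h := ((hasDerivAt_id r).const_mul 2).mul (RCu_hasDerivAt r)
        refine h.congr_deriv ?_
        simp only [id_eq]
        ring
      exact p1.sub (hf_deriv r)
    have hDcont : Continuous D :=
      ((continuous_const.mul continuous_id).mul RCu_continuous).sub hfcont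
    have hD_mono : MonotoneOn D (Set.Ici 0) := by
      apply monotoneOn_of_deriv_nonneg (convex_Ici 0) hDcont.continuousOn
        (fun x _ => (hD_deriv x).differentiableAt.differentiableWithinAt)
      intro x hx
      rw [interior_Ici] at hx
      rw [(funext fun r => (hD_deriv r).deriv : deriv D = _)]
      have e1 := RCu_add_two_mul x
      have e2 := Real.rpow_pos_of_pos (RC_base_pos x) (-(5/4) : ℝ)
      have e3 : g x ≤ RCu x := by
        have h1 := hφ_le_one x hx.le
        simp only [hg_def]
        nlinarith [RCu_pos x, hφ_pos x]
      simp only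
      linarith
    intro r hr
    have h := hD_mono (Set.self_mem_Ici) (Set.mem_Ici.mpr hr) hr
    simp only [hD_def, hf0, mul_zero, zero_mul, sub_zero] at h
    linarith
  -- Concavity.
  have hg'_nonpos : ∀ s, 0 ≤ s → g' s ≤ 0 := by
    intro s hs
    have h1 : φ s * (-(j s) / 4) * RCu s ≤ 0 :=
      mul_nonpos_iff.mpr (Or.inr ⟨mul_nonpos_of_nonneg_of_nonpos (hφ_pos s).le
        (by have := hj_nonneg s; linarith), (RCu_pos s).le⟩)
    have h2 : φ s * RCu' s ≤ 0 :=
      mul_nonpos_of_nonneg_of_nonpos (hφ_pos s).le (RCu'_nonpos hs)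
    simp only [hg'_def]
    linarith
  have hconc : ConcaveOn ℝ (Set.Ici 0) f := by
    apply AntitoneOn.concaveOn_of_deriv (convex_Ici 0) hfcont.continuousOn
      (fun x _ => (hf_deriv x).differentiableAt.differentiableWithinAt)
    rw [hdf, interior_Ici]
    apply antitoneOn_of_deriv_nonpos (convex_Ioi 0) hgcont.continuousOn
      (fun x _ => (hg_deriv x).differentiableAt.differentiableWithinAt)
    intro x hx
    rw [interior_Ioi] at hx
    rw [hdg]
    exact hg'_nonpos x hx.le
  -- Subadditivity (from concavity and `f 0 = 0`).
  have hsub : ∀ a b : ℝ, 0 ≤ a → 0 ≤ b → f (a + b) ≤ f a + f b := by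
    intro a b ha hb
    rcases (add_nonneg ha hb).lt_or_eq with h | h
    · have hab : (0:ℝ) < a + b := h
      have h1 := hconc.2 (Set.mem_Ici.mpr hab.le) (Set.self_mem_Ici (a := (0:ℝ)))
        (div_nonneg ha hab.le) (div_nonneg hb hab.le) (by field_simp; try ring)
      have h2 := hconc.2 (Set.mem_Ici.mpr hab.le) (Set.self_mem_Ici (a := (0:ℝ)))
        (div_nonneg hb hab.le) (div_nonneg ha hab.le) (by field_simp; try ring)
      simp only [smul_eq_mul, hf0, mul_zero, add_zero] at h1 h2
      rw [show a / (a+b) * (a+b) = a by field_simp] at h1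
      rw [show b / (a+b) * (a+b) = b by field_simp] at h2
      have h3 : a / (a+b) * f (a+b) + b / (a+b) * f (a+b) = f (a+b) := by
        field_simp
      linarith
    · have ha0 : a = 0 := by linarith
      have hb0 : b = 0 := by linarith
      simp [ha0, hb0, hf0]
  -- Constants.
  set X : ℝ := (1 + R ^ 2) ^ (-(5/4) : ℝ) with hX_def
  have hX_pos : 0 < X := Real.rpow_pos_of_pos (RC_base_pos R) _
  set c1 : ℝ := φinf * (1/4) * X with hc1_def
  set c2 : ℝ := φinf * ε / 8 with hc2_def
  have hc1_pos : 0 < c1 := by positivity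
  have hc2_pos : 0 < c2 := by positivity
  set c : ℝ := min c1 c2 with hc_def
  have hc_pos : 0 < c := lt_min hc1_pos hc2_pos
  refine ⟨2 * σ ^ 2 * c, by positivity, f, hfC2, hf0, fun r hr => hf_pos r hr, hf_mono, hconc,
    ?_, ?_, ?_⟩
  · -- f' ≤ 1
    intro r hr
    rw [hdf]
    exact hg_le_one r hr
  · -- metric axioms
    intro d _ x y z
    refine ⟨⟨fun hfxy => ?_, fun hxy => ?_⟩, by rw [norm_sub_rev], ?_⟩
    · by_contra hne
      have hpos : 0 < ‖x - y‖ := norm_pos_iff.mpr (sub_ne_zero.mpr hne)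
      exact (hf_pos _ hpos).ne' hfxy
    · rw [hxy]
      simp [hf0]
    · have htri : ‖x - z‖ ≤ ‖x - y‖ + ‖y - z‖ := by
        have := norm_add_le (x - y) (y - z)
        rwa [sub_add_sub_cancel] at this
      calc f ‖x - z‖ ≤ f (‖x - y‖ + ‖y - z‖) :=
            hf_mono (Set.mem_Ici.mpr (norm_nonneg _))
              (Set.mem_Ici.mpr (add_nonneg (norm_nonneg _) (norm_nonneg _))) htri
        _ ≤ f ‖x - y‖ + f ‖y - z‖ := hsub _ _ (norm_nonneg _) (norm_nonneg _)
  · -- the differential inequality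
    intro r hr
    have hcoeff : -(2 * σ ^ 2 * c / (2 * σ ^ 2)) = -c := by
      field_simp
    rw [hdf, hdg, hcoeff]
    have key : g' r - 1 / 4 * r * κ r * g r
        = φ r * (RCu' r - r / 4 * (max (-(κ r)) 0 + κ r) * RCu r) := by
      simp only [hg'_def, hg_def, hj_eq r hr]
      ring
    rw [key]
    have hfr_le := hf_le r hr
    have hfr_nonneg := hf_nonneg r hr
    rcases le_total r R with hcase | hcase
    · -- small radii: use the negative second-order term
      have hA : 0 ≤ max (-(κ r)) 0 + κ r := by
        rcases max_cases (-(κ r)) 0 with ⟨h1, h2⟩ | ⟨h1, h2⟩ <;> linarith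
      have s0 : 0 ≤ r / 4 * (max (-(κ r)) 0 + κ r) * RCu r :=
        mul_nonneg (mul_nonneg (by linarith) hA) (RCu_pos r).le
      have s1 : φ r * (RCu' r - r / 4 * (max (-(κ r)) 0 + κ r) * RCu r) ≤ φ r * RCu' r :=
        mul_le_mul_of_nonneg_left (by linarith) (hφ_pos r).le
      have s2 : φ r * RCu' r ≤ φinf * RCu' r :=
        mul_le_mul_of_nonpos_right (hφinf_le r hr) (RCu'_nonpos hr)
      have s3 : RCu' r ≤ -(r/2) * X := by
        have hanti : X ≤ (1 + r ^ 2) ^ (-(5/4) : ℝ) :=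
          RCpow_anti (p := (-(5/4) : ℝ)) (by norm_num) hr hcase
        unfold RCu'
        exact mul_le_mul_of_nonpos_left hanti (by linarith)
      have s4 : φinf * RCu' r ≤ φinf * (-(r/2) * X) :=
        mul_le_mul_of_nonneg_left s3 hφinf_pos.le
      have s5 : φinf * (-(r/2) * X) = -(c1 * (2 * r)) := by
        rw [hc1_def]; ring
      have s6 : f r ≤ 2 * r := by
        have : 2 * r * RCu r ≤ 2 * r * 1 :=
          mul_le_mul_of_nonneg_left (RCu_le_one r) (by linarith)
        linarith
      have s7 : c1 * f r ≤ c1 * (2 * r) := mul_le_mul_of_nonneg_left s6 hc1_pos.le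
      have s8 : c * f r ≤ c1 * f r :=
        mul_le_mul_of_nonneg_right (min_le_left _ _) hfr_nonneg
      linarith
    · -- large radii: use the convexity-forcing term
      have hκr : ε ≤ κ r := hRκ r hcase
      have hAeq : max (-(κ r)) 0 + κ r = κ r := by
        rw [max_eq_right (by linarith)]; ring
      rw [hAeq]
      have t1 : φ r * (RCu' r - r / 4 * κ r * RCu r) ≤ φ r * (-(r / 4 * κ r * RCu r)) :=
        mul_le_mul_of_nonneg_left (by linarith [RCu'_nonpos hr]) (hφ_pos r).le
      have q1 : φinf * ε ≤ φ r * κ r :=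
        mul_le_mul (hφinf_le r hr) hκr hεpos.le (hφ_pos r).le
      have q2 : φinf * ε * (r / 4 * RCu r) ≤ φ r * κ r * (r / 4 * RCu r) :=
        mul_le_mul_of_nonneg_right q1 (mul_nonneg (by linarith) (RCu_pos r).le)
      have q3 : c2 * f r ≤ c2 * (2 * r * RCu r) :=
        mul_le_mul_of_nonneg_left hfr_le hc2_pos.le
      have q4 : c * f r ≤ c2 * f r :=
        mul_le_mul_of_nonneg_right (min_le_right _ _) hfr_nonneg
      have e1 : φ r * (-(r / 4 * κ r * RCu r)) = -(φ r * κ r * (r / 4 * RCu r)) := by ring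
      have e2 : c2 * (2 * r * RCu r) = φinf * ε * (r / 4 * RCu r) := by
        rw [hc2_def]; ring
      linarith
end

section
/- Let E be a measurable space, f a probability measure on E, N ≥ 1, and let Z¹,…,Z^N be independent identically distributed E-valued random variables with common law f on a probability space (Ω, 𝓕, P). Let K : E × E → ℝ^m be a bounded measurable function and set ‖K‖_∞ := sup_{(x,y)} |K(x,y)|, where |·| is the Euclidean norm on ℝ^m. Then for every i ∈ {1,…,N}, E[ | (1/N) ∑_{j=1}^N ( K(Z^i, Z^j) − ∫_E K(Z^i, y) f(dy) ) |² ] ≤ 4‖K‖_∞² / N. -/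
open MeasureTheory ProbabilityTheory
open scoped RealInnerProductSpace

/-- **Law-of-large-numbers estimate at the heart of Sznitman's coupling proof.** For i.i.d.
`f`-distributed variables `Z¹,…,Z^N` and a bounded measurable kernel `K`,
`E[ |(1/N)∑ⱼ (K(Zⁱ,Zʲ) − ∫ K(Zⁱ,y) f(dy))|² ] ≤ 4‖K‖∞²/N`. -/
theorem empirical_lln_estimate
    {E : Type*} [MeasurableSpace E]
    {Ω : Type*} [MeasurableSpace Ω] (P : Measure Ω) [IsProbabilityMeasure P]
    (f : Measure E) [IsProbabilityMeasure f]
    (N m : ℕ) (hN : 1 ≤ N)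
    (Z : Fin N → Ω → E)
    (hZmeas : ∀ i, Measurable (Z i))
    (hindep : iIndepFun Z P)
    (hlaw : ∀ i, P.map (Z i) = f)
    (K : E × E → EuclideanSpace ℝ (Fin m)) (hK : Measurable K)
    (M : ℝ) (hM : ∀ p, ‖K p‖ ≤ M) :
    ∀ i : Fin N,
      ∫ ω, ‖(N : ℝ)⁻¹ • ∑ j : Fin N, (K (Z i ω, Z j ω) - ∫ y, K (Z i ω, y) ∂f)‖ ^ 2 ∂P
        ≤ 4 * M ^ 2 / N := by
  intro i
  classical
  -- Ω is nonempty, hence E is nonempty, hence 0 ≤ M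
  have hΩne : Nonempty Ω := by
    by_contra h
    rw [not_nonempty_iff] at h
    have h1 : P Set.univ = 1 := measure_univ
    rw [Set.univ_eq_empty_iff.mpr h] at h1
    simp at h1
  obtain ⟨ω₀⟩ := hΩne
  have hM0 : 0 ≤ M := le_trans (norm_nonneg _) (hM (Z i ω₀, Z i ω₀))
  -- the centered kernel ψ
  set ψ : E × E → EuclideanSpace ℝ (Fin m) :=
    fun p => K p - ∫ y, K (p.1, y) ∂f with hψdef
  have hKs : StronglyMeasurable K := hK.stronglyMeasurable
  have hκs : StronglyMeasurable (fun x : E => ∫ y, K (x, y) ∂f) :=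
    hKs.integral_prod_right'
  have hψs : StronglyMeasurable ψ :=
    hKs.sub (hκs.comp_measurable measurable_fst)
  have hψm : Measurable ψ := hψs.measurable
  -- bound on ψ
  have hψbd : ∀ p, ‖ψ p‖ ≤ 2 * M := by
    intro p
    have h1 : ‖∫ y, K (p.1, y) ∂f‖ ≤ M * (f Set.univ).toReal :=
      norm_integral_le_of_norm_le_const (Filter.Eventually.of_forall fun y => hM _)
    simp only [measure_univ, ENNReal.toReal_one, mul_one] at h1
    calc ‖ψ p‖ ≤ ‖K p‖ + ‖∫ y, K (p.1, y) ∂f‖ := norm_sub_le _ _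
      _ ≤ M + M := add_le_add (hM p) h1
      _ = 2 * M := by ring
  -- integrability of y ↦ K (x, y)
  have hKxint : ∀ x : E, Integrable (fun y => K (x, y)) f := by
    intro x
    refine Integrable.mono' (integrable_const M) ?_
      (Filter.Eventually.of_forall fun y => hM _)
    exact (hK.comp (measurable_prodMk_left)).aestronglyMeasurable
  -- centering: ∫ ψ (x, y) df(y) = 0
  have hψzero : ∀ x : E, ∫ y, ψ (x, y) ∂f = 0 := by
    intro x
    have h0 : (fun y => ψ (x, y)) = fun y => K (x, y) - ∫ y', K (x, y') ∂f := rfl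
    rw [h0, integral_sub (hKxint x) (integrable_const _)]
    simp [integral_const]
  have hψxint : ∀ x : E, Integrable (fun y => ψ (x, y)) f := by
    intro x
    refine Integrable.mono' (integrable_const (2 * M)) ?_
      (Filter.Eventually.of_forall fun y => hψbd _)
    exact (hψm.comp (measurable_prodMk_left)).aestronglyMeasurable
  -- the random variables ψZ j
  set ψZ : Fin N → Ω → EuclideanSpace ℝ (Fin m) :=
    fun j ω => ψ (Z i ω, Z j ω) with hψZdef
  have hψZm : ∀ j, Measurable (ψZ j) :=
    fun j => hψm.comp ((hZmeas i).prodMk (hZmeas j))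
  -- integrability of the inner products
  have hinner_int : ∀ j k : Fin N,
      Integrable (fun ω => ⟪ψZ j ω, ψZ k ω⟫) P := by
    intro j k
    refine Integrable.mono' (integrable_const ((2*M) * (2*M))) ?_ ?_
    · exact ((hψZm j).inner (hψZm k)).aestronglyMeasurable
    · refine Filter.Eventually.of_forall fun ω => ?_
      calc ‖⟪ψZ j ω, ψZ k ω⟫‖ = |⟪ψZ j ω, ψZ k ω⟫| := rfl
        _ ≤ ‖ψZ j ω‖ * ‖ψZ k ω‖ := abs_real_inner_le_norm _ _
        _ ≤ (2*M) * (2*M) :=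
            mul_le_mul (hψbd _) (hψbd _) (norm_nonneg _) (by linarith)
  -- cross terms vanish
  have hcross : ∀ j k : Fin N, k ≠ i → k ≠ j →
      ∫ ω, ⟪ψZ j ω, ψZ k ω⟫ ∂P = 0 := by
    intro j k hki hkj
    set W : Ω → E × E := fun ω => (Z i ω, Z j ω) with hWdef
    have hWm : Measurable W := (hZmeas i).prodMk (hZmeas j)
    have hindW : IndepFun W (Z k) P :=
      hindep.indepFun_prodMk hZmeas i j k hki.symm hkj.symm
    have hmap : P.map (fun ω => (W ω, Z k ω)) = (P.map W).prod f := by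
      rw [← hlaw k]
      exact (indepFun_iff_map_prod_eq_prod_map_map hWm.aemeasurable
        (hZmeas k).aemeasurable).mp hindW
    set g : (E × E) × E → ℝ := fun q => ⟪ψ q.1, ψ (q.1.1, q.2)⟫ with hgdef
    have hgm : Measurable g := by
      apply Measurable.inner
      · exact hψm.comp measurable_fst
      · exact hψm.comp ((measurable_fst.comp measurable_fst).prodMk measurable_snd)
    have h1 : ∫ ω, ⟪ψZ j ω, ψZ k ω⟫ ∂P
        = ∫ q, g q ∂(P.map (fun ω => (W ω, Z k ω))) := by
      rw [integral_map (hWm.prodMk (hZmeas k)).aemeasurable hgm.aestronglyMeasurable]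
    rw [h1, hmap]
    haveI : IsProbabilityMeasure (P.map W) :=
      Measure.isProbabilityMeasure_map hWm.aemeasurable
    have hgint : Integrable g ((P.map W).prod f) := by
      refine Integrable.mono' (integrable_const ((2*M) * (2*M))) hgm.aestronglyMeasurable ?_
      refine Filter.Eventually.of_forall fun q => ?_
      calc ‖g q‖ = |⟪ψ q.1, ψ (q.1.1, q.2)⟫| := rfl
        _ ≤ ‖ψ q.1‖ * ‖ψ (q.1.1, q.2)‖ := abs_real_inner_le_norm _ _
        _ ≤ (2*M) * (2*M) :=
            mul_le_mul (hψbd _) (hψbd _) (norm_nonneg _) (by linarith)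
    rw [MeasureTheory.integral_prod _ hgint]
    have : ∀ w : E × E, ∫ z, g (w, z) ∂f = 0 := by
      intro w
      have := integral_inner (𝕜 := ℝ) (hψxint w.1) (ψ w)
      simp only [hgdef]
      rw [this, hψzero w.1, inner_zero_right]
    simp only [this, integral_zero]
  -- diagonal terms
  have hdiag : ∀ j : Fin N, ∫ ω, ⟪ψZ j ω, ψZ j ω⟫ ∂P ≤ 4 * M ^ 2 := by
    intro j
    have h1 : ∫ ω, ⟪ψZ j ω, ψZ j ω⟫ ∂P ≤ ∫ _ω, 4 * M ^ 2 ∂P := by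
      refine integral_mono (hinner_int j j) (integrable_const _) fun ω => ?_
      rw [real_inner_self_eq_norm_sq]
      calc ‖ψZ j ω‖ ^ 2 ≤ (2*M) ^ 2 := by
            exact pow_le_pow_left₀ (norm_nonneg _) (hψbd _) 2
        _ = 4 * M ^ 2 := by ring
    simpa using h1
  -- main computation
  have hNpos : (0:ℝ) < N := by exact_mod_cast hN
  have key : ∫ ω, ‖(N : ℝ)⁻¹ • ∑ j : Fin N, ψZ j ω‖ ^ 2 ∂P
      = ((N:ℝ)⁻¹)^2 * ∑ j : Fin N, ∑ k : Fin N, ∫ ω, ⟪ψZ j ω, ψZ k ω⟫ ∂P := by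
    have hpt : ∀ ω, ‖(N : ℝ)⁻¹ • ∑ j : Fin N, ψZ j ω‖ ^ 2
        = ((N:ℝ)⁻¹)^2 * ∑ j : Fin N, ∑ k : Fin N, ⟪ψZ j ω, ψZ k ω⟫ := by
      intro ω
      rw [norm_smul, mul_pow]
      congr 1
      · rw [Real.norm_eq_abs, abs_of_nonneg (by positivity)]
      · rw [← real_inner_self_eq_norm_sq, sum_inner]
        exact Finset.sum_congr rfl fun j _ => inner_sum _ _ _
    simp_rw [hpt]
    rw [integral_const_mul]
    congr 1
    rw [integral_finset_sum]
    · exact Finset.sum_congr rfl fun j _ =>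
        (integral_finset_sum _ fun k _ => hinner_int j k)
    · intro j _
      exact integrable_finset_sum _ fun k _ => hinner_int j k
  have hsum : ∀ j : Fin N, ∑ k : Fin N, ∫ ω, ⟪ψZ j ω, ψZ k ω⟫ ∂P
      = ∫ ω, ⟪ψZ j ω, ψZ j ω⟫ ∂P := by
    intro j
    refine Finset.sum_eq_single_of_mem j (Finset.mem_univ j) fun k _ hkj => ?_
    by_cases hki : k = i
    · subst hki
      -- then j ≠ k, j ≠ k: use symmetry, ψZ j independent summand
      have hjk : j ≠ k := fun h => hkj h.symm
      have : ∫ ω, ⟪ψZ j ω, ψZ k ω⟫ ∂P = ∫ ω, ⟪ψZ k ω, ψZ j ω⟫ ∂P := by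
        simp_rw [real_inner_comm]
      rw [this]
      exact hcross k j hjk (fun h => hkj h.symm)
    · exact hcross j k hki hkj
  calc ∫ ω, ‖(N : ℝ)⁻¹ • ∑ j : Fin N, (K (Z i ω, Z j ω) - ∫ y, K (Z i ω, y) ∂f)‖ ^ 2 ∂P
      = ((N:ℝ)⁻¹)^2 * ∑ j : Fin N, ∑ k : Fin N, ∫ ω, ⟪ψZ j ω, ψZ k ω⟫ ∂P := key
    _ = ((N:ℝ)⁻¹)^2 * ∑ j : Fin N, ∫ ω, ⟪ψZ j ω, ψZ j ω⟫ ∂P := by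
        rw [Finset.sum_congr rfl fun j _ => hsum j]
    _ ≤ ((N:ℝ)⁻¹)^2 * ∑ _j : Fin N, (4 * M ^ 2) := by
        refine mul_le_mul_of_nonneg_left ?_ (by positivity)
        exact Finset.sum_le_sum fun j _ => hdiag j
    _ = ((N:ℝ)⁻¹)^2 * (N * (4 * M ^ 2)) := by
        rw [Finset.sum_const, Finset.card_univ, Fintype.card_fin, nsmul_eq_mul]
    _ = 4 * M ^ 2 / N := by
        field_simp
end

section
/- Let E be a measurable space and let (X¹,…,X^M) be exchangeable E-valued random variables on a probability space (Ω, 𝓕, P), i.e. (X^{σ(1)},…,X^{σ(M)}) has the same joint law as (X¹,…,X^M) for every permutation σ of {1,…,M}. Let K : E × E → ℝ^m be bounded measurable with ‖K‖_∞ := sup |K|, and let N be an integer with 1 ≤ N ≤ M. Then E[ | (1/M) ∑_{j=1}^M K(X¹, X^j) − (1/N) ∑_{j=1}^N K(X¹, X^j) |² ] ≤ 8·(1/N − 1/M)·‖K‖_∞², where |·| is the Euclidean norm on ℝ^m. -/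
open MeasureTheory

/-- **Exchangeability estimate from McKean's Cauchy-sequence coupling argument.** For
exchangeable `(X¹,…,X^M)` and a bounded measurable kernel `K`, the mean-square discrepancy
between the `M`-average and the `N`-average of `K(X¹, ·)` is at most `8(1/N − 1/M)‖K‖∞²`. -/
theorem exchangeable_truncation_estimate
    {E : Type*} [MeasurableSpace E]
    {Ω : Type*} [MeasurableSpace Ω] (P : Measure Ω) [IsProbabilityMeasure P]
    (M N m : ℕ) (hN : 1 ≤ N) (hNM : N ≤ M)
    (X : Fin M → Ω → E) (hXmeas : ∀ i, Measurable (X i))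
    (hexch : ∀ σ : Equiv.Perm (Fin M),
      P.map (fun ω => fun i => X (σ i) ω) = P.map (fun ω => fun i => X i ω))
    (K : E × E → EuclideanSpace ℝ (Fin m)) (hK : Measurable K)
    (B : ℝ) (hB : ∀ p, ‖K p‖ ≤ B) :
    ∫ ω, ‖(M : ℝ)⁻¹ • ∑ j : Fin M, K (X (Fin.castLE hNM ⟨0, hN⟩) ω, X j ω)
          - (N : ℝ)⁻¹ • ∑ j : Fin N,
              K (X (Fin.castLE hNM ⟨0, hN⟩) ω, X (Fin.castLE hNM j) ω)‖ ^ 2 ∂P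
      ≤ 8 * (1 / N - 1 / M) * B ^ 2 := by
  have hMpos : 0 < M := lt_of_lt_of_le hN hNM
  have hNR : (0:ℝ) < (N:ℝ) := by exact_mod_cast hN
  have hMR : (0:ℝ) < (M:ℝ) := by exact_mod_cast hMpos
  set i0 : Fin M := Fin.castLE hNM ⟨0, hN⟩ with hi0
  have hΩ : Nonempty Ω := by
    by_contra h
    rw [not_nonempty_iff] at h
    have h1 : P Set.univ = 1 := measure_univ
    simp [Set.univ_eq_empty_iff.2 h] at h1
  obtain ⟨ω0⟩ := hΩ
  have hB0 : 0 ≤ B := le_trans (norm_nonneg _) (hB (X i0 ω0, X i0 ω0))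
  -- kernel evaluated along the samples
  have hKfm : ∀ j : Fin M, Measurable (fun ω => K (X i0 ω, X j ω)) :=
    fun j => hK.comp ((hXmeas i0).prodMk (hXmeas j))
  set c : Fin M → ℝ := fun j => (M:ℝ)⁻¹ - (if (j:ℕ) < N then (N:ℝ)⁻¹ else 0) with hc
  set t : Fin M → Fin M → ℝ :=
    fun j k => ∫ ω, (inner ℝ (K (X i0 ω, X j ω)) (K (X i0 ω, X k ω)) : ℝ) ∂P with ht
  -- pointwise bound on the inner products
  have hinner : ∀ (j k : Fin M) (ω : Ω),
      |(inner ℝ (K (X i0 ω, X j ω)) (K (X i0 ω, X k ω)) : ℝ)| ≤ B^2 := by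
    intro j k ω
    calc |(inner ℝ (K (X i0 ω, X j ω)) (K (X i0 ω, X k ω)) : ℝ)|
        ≤ ‖K (X i0 ω, X j ω)‖ * ‖K (X i0 ω, X k ω)‖ := abs_real_inner_le_norm _ _
      _ ≤ B * B := mul_le_mul (hB _) (hB _) (norm_nonneg _) hB0
      _ = B^2 := (sq B).symm
  have hInt : ∀ j k : Fin M,
      Integrable (fun ω => (inner ℝ (K (X i0 ω, X j ω)) (K (X i0 ω, X k ω)) : ℝ)) P := by
    intro j k
    refine (integrable_const (B^2)).mono' ((hKfm j).inner (hKfm k)).aestronglyMeasurable ?_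
    exact ae_of_all _ fun ω => by simpa [Real.norm_eq_abs] using hinner j k ω
  have htb : ∀ j k : Fin M, |t j k| ≤ B^2 := by
    intro j k
    calc |t j k| ≤ ∫ ω, |(inner ℝ (K (X i0 ω, X j ω)) (K (X i0 ω, X k ω)) : ℝ)| ∂P := by
          simpa [Real.norm_eq_abs] using norm_integral_le_integral_norm
            (fun ω => (inner ℝ (K (X i0 ω, X j ω)) (K (X i0 ω, X k ω)) : ℝ)) (μ := P)
      _ ≤ ∫ _ω, B^2 ∂P := integral_mono (hInt j k).abs (integrable_const _)
            (fun ω => hinner j k ω)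
      _ = B^2 := by simp
  -- the filtered index set
  have hfilter : Finset.univ.map (Fin.castLEEmb hNM)
      = Finset.univ.filter (fun j : Fin M => (j:ℕ) < N) := by
    ext j
    simp only [Finset.mem_map, Finset.mem_univ, true_and, Finset.mem_filter]
    constructor
    · rintro ⟨i, rfl⟩
      simpa using i.isLt
    · intro hj
      exact ⟨⟨(j:ℕ), hj⟩, by ext; simp⟩
  have hcard : (Finset.univ.filter (fun j : Fin M => (j:ℕ) < N)).card = N := by
    rw [← hfilter]; simp
  have hcardnot : (Finset.univ.filter (fun j : Fin M => ¬ (j:ℕ) < N)).card = M - N := by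
    have := Finset.card_filter_add_card_filter_not
      (s := (Finset.univ : Finset (Fin M))) (p := fun j : Fin M => (j:ℕ) < N)
    simp only [Finset.card_univ, Fintype.card_fin, hcard] at this
    omega
  -- splitting sums over the two blocks of indices
  have hsplitsum : ∀ (f : Fin M → ℝ) (a b' : ℝ), (∀ j : Fin M, (j:ℕ) < N → f j = a) →
      (∀ j : Fin M, ¬ (j:ℕ) < N → f j = b') →
      ∑ j : Fin M, f j = N * a + (M - N : ℝ) * b' := by
    intro f a b' ha hb'
    rw [← Finset.sum_filter_add_sum_filter_not Finset.univ (fun j : Fin M => (j:ℕ) < N)]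
    rw [Finset.sum_congr rfl (fun j hj => ha j (Finset.mem_filter.1 hj).2),
        Finset.sum_congr rfl (fun j hj => hb' j (Finset.mem_filter.1 hj).2),
        Finset.sum_const, Finset.sum_const, hcard, hcardnot]
    have : ((M - N : ℕ) : ℝ) = (M : ℝ) - N := by
      rw [Nat.cast_sub hNM]
    simp [this, nsmul_eq_mul]
  have hi0N : ((i0 : Fin M) : ℕ) < N := hN
  have hci0 : c i0 = (M:ℝ)⁻¹ - (N:ℝ)⁻¹ := by simp [hc, hi0N]
  have hcsum : ∑ j : Fin M, c j = 0 := by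
    rw [hsplitsum c ((M:ℝ)⁻¹ - (N:ℝ)⁻¹) ((M:ℝ)⁻¹)
      (fun j hj => by simp [hc, hj]) (fun j hj => by simp [hc, hj])]
    field_simp
    ring
  have hQ : ∑ j : Fin M, (c j)^2 = 1/(N:ℝ) - 1/(M:ℝ) := by
    rw [hsplitsum (fun j => (c j)^2) (((M:ℝ)⁻¹ - (N:ℝ)⁻¹)^2) (((M:ℝ)⁻¹)^2)
      (fun j hj => by simp [hc, hj]) (fun j hj => by simp [hc, hj])]
    field_simp
    ring
  -- rewrite the integrand as a quadratic form
  have hD : ∀ ω : Ω, ((M : ℝ)⁻¹ • ∑ j : Fin M, K (X i0 ω, X j ω)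
      - (N : ℝ)⁻¹ • ∑ j : Fin N, K (X i0 ω, X (Fin.castLE hNM j) ω))
      = ∑ j : Fin M, c j • K (X i0 ω, X j ω) := by
    intro ω
    have h1 : (∑ j : Fin N, K (X i0 ω, X (Fin.castLE hNM j) ω))
        = ∑ j ∈ Finset.univ.filter (fun j : Fin M => (j:ℕ) < N), K (X i0 ω, X j ω) := by
      rw [← hfilter, Finset.sum_map]
      rfl
    rw [h1, Finset.smul_sum, Finset.smul_sum, Finset.sum_filter, ← Finset.sum_sub_distrib]
    refine Finset.sum_congr rfl fun j _ => ?_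
    by_cases h : (j:ℕ) < N <;> simp [hc, h, sub_smul]
  have hnorm : ∀ ω : Ω, ‖∑ j : Fin M, c j • K (X i0 ω, X j ω)‖^2
      = ∑ j : Fin M, ∑ k : Fin M,
          c j * c k * (inner ℝ (K (X i0 ω, X j ω)) (K (X i0 ω, X k ω)) : ℝ) := by
    intro ω
    rw [← real_inner_self_eq_norm_sq, sum_inner]
    refine Finset.sum_congr rfl fun j _ => ?_
    rw [inner_sum]
    refine Finset.sum_congr rfl fun k _ => ?_
    rw [real_inner_smul_left, real_inner_smul_right]
    ring
  have hIeq : ∫ ω, ‖(M : ℝ)⁻¹ • ∑ j : Fin M, K (X i0 ω, X j ω)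
          - (N : ℝ)⁻¹ • ∑ j : Fin N, K (X i0 ω, X (Fin.castLE hNM j) ω)‖ ^ 2 ∂P
      = ∑ j : Fin M, ∑ k : Fin M, c j * c k * t j k := by
    have hfun : (fun ω => ‖(M : ℝ)⁻¹ • ∑ j : Fin M, K (X i0 ω, X j ω)
          - (N : ℝ)⁻¹ • ∑ j : Fin N, K (X i0 ω, X (Fin.castLE hNM j) ω)‖ ^ 2)
        = fun ω => ∑ j : Fin M, ∑ k : Fin M,
            c j * c k * (inner ℝ (K (X i0 ω, X j ω)) (K (X i0 ω, X k ω)) : ℝ) :=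
      funext fun ω => by rw [hD ω, hnorm ω]
    rw [hfun, integral_finset_sum _ (fun j _ =>
      integrable_finset_sum _ fun k _ => (hInt j k).const_mul _)]
    refine Finset.sum_congr rfl fun j _ => ?_
    rw [integral_finset_sum _ (fun k _ => (hInt j k).const_mul _)]
    exact Finset.sum_congr rfl fun k _ => integral_const_mul _ _
  -- transport along permutations fixing i0
  have hT : ∀ σ : Equiv.Perm (Fin M), σ i0 = i0 → ∀ j k : Fin M, t (σ j) (σ k) = t j k := by
    intro σ hσ j k
    have hgm : Measurable (fun v : Fin M → E => (inner ℝ (K (v i0, v j)) (K (v i0, v k)) : ℝ)) :=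
      (hK.comp ((measurable_pi_apply i0).prodMk (measurable_pi_apply j))).inner
        (hK.comp ((measurable_pi_apply i0).prodMk (measurable_pi_apply k)))
    have hXm : Measurable (fun ω => fun i => X i ω) := measurable_pi_lambda _ hXmeas
    have hXσ : Measurable (fun ω => fun i => X (σ i) ω) :=
      measurable_pi_lambda _ (fun i => hXmeas (σ i))
    have h1 : t (σ j) (σ k)
        = ∫ ω, (fun v : Fin M → E => (inner ℝ (K (v i0, v j)) (K (v i0, v k)) : ℝ))
            (fun i => X (σ i) ω) ∂P := by
      simp only [ht, hσ]
    rw [h1, ← integral_map hXσ.aemeasurable hgm.aestronglyMeasurable, hexch σ,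
      integral_map hXm.aemeasurable hgm.aestronglyMeasurable]
  have hsym : ∀ j k : Fin M, t j k = t k j := by
    intro j k
    simp only [ht]
    congr 1
    funext ω
    exact real_inner_comm _ _
  rw [hIeq]
  have hP0 : (0:ℝ) ≤ 1/(N:ℝ) - 1/(M:ℝ) := by
    have : (N:ℝ) ≤ M := by exact_mod_cast hNM
    rw [sub_nonneg]
    apply one_div_le_one_div_of_le hNR this
  by_cases hM3 : 3 ≤ M
  · -- main case: there are at least two indices besides i0
    set j1 : Fin M := ⟨1, by omega⟩ with hj1
    set k1 : Fin M := ⟨2, by omega⟩ with hk1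
    have h01 : i0 ≠ j1 := by simp [hi0, hj1, Fin.ext_iff]
    have h02 : i0 ≠ k1 := by simp [hi0, hk1, Fin.ext_iff]
    have h12 : j1 ≠ k1 := by simp [hj1, hk1, Fin.ext_iff]
    have hswap_fix : ∀ (x y : Fin M), x ≠ i0 → y ≠ i0 → (Equiv.swap x y) i0 = i0 :=
      fun x y hx hy => Equiv.swap_apply_of_ne_of_ne (Ne.symm hx) (Ne.symm hy)
    have hbb : ∀ j, j ≠ i0 → t j j = t j1 j1 := by
      intro j hj
      have h := hT (Equiv.swap j j1) (hswap_fix _ _ hj (Ne.symm h01)) j1 j1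
      rw [Equiv.swap_apply_right] at h
      exact h
    have hcc2 : ∀ k, k ≠ i0 → t i0 k = t i0 j1 := by
      intro k hk
      have h := hT (Equiv.swap k j1) (hswap_fix _ _ hk (Ne.symm h01)) i0 j1
      rw [hswap_fix _ _ hk (Ne.symm h01), Equiv.swap_apply_right] at h
      exact h
    have hdd : ∀ j k, j ≠ i0 → k ≠ i0 → j ≠ k → t j k = t j1 k1 := by
      intro j k hj hk hjk
      set σ1 := Equiv.swap j j1 with hσ1
      have hfix1 : σ1 i0 = i0 := hswap_fix _ _ hj (Ne.symm h01)
      have hσ1j1 : σ1 j1 = j := Equiv.swap_apply_right j j1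
      have hσ1k1 : σ1 k1 ≠ j := by
        intro hcon
        exact h12 (σ1.injective (by rw [hσ1j1, hcon])).symm
      have hσ1k1i0 : σ1 k1 ≠ i0 := by
        intro hcon
        exact (Ne.symm h02) (σ1.injective (by rw [hcon]; exact hfix1.symm))
      set σ := σ1.trans (Equiv.swap (σ1 k1) k) with hσ
      have hfix : σ i0 = i0 := by
        simp only [hσ, Equiv.trans_apply, hfix1]
        exact Equiv.swap_apply_of_ne_of_ne (Ne.symm hσ1k1i0) (Ne.symm hk)
      have hj1j : σ j1 = j := by
        simp only [hσ, Equiv.trans_apply, hσ1j1]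
        exact Equiv.swap_apply_of_ne_of_ne (Ne.symm hσ1k1) hjk
      have hk1k : σ k1 = k := by
        simp only [hσ, Equiv.trans_apply]
        exact Equiv.swap_apply_left _ _
      have h := hT σ hfix j1 k1
      rw [hj1j, hk1k] at h
      exact h
    have hprod : ∀ j k : Fin M, c j * c k * t j k
        = c j * c k * t j1 k1
          + (if j = k then c j * c k * (t j1 j1 - t j1 k1) else 0)
          + (if j = i0 then c j * c k * (t i0 j1 - t j1 k1) else 0)
          + (if k = i0 then c j * c k * (t i0 j1 - t j1 k1) else 0)
          + (if j = i0 then (if k = i0 then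
              c j * c k * (t i0 i0 - t j1 j1 - 2 * t i0 j1 + 2 * t j1 k1) else 0) else 0) := by
      intro j k
      by_cases hj : j = i0
      · by_cases hk : k = i0
        · rw [hj, hk]
          simp only [eq_self_iff_true, if_true]
          ring
        · rw [hj, hcc2 k hk]
          simp only [eq_self_iff_true, if_true, if_neg hk,
            if_neg (fun h : i0 = k => hk h.symm)]
          ring
      · by_cases hk : k = i0
        · rw [hk, hsym j i0, hcc2 j hj]
          simp only [eq_self_iff_true, if_true, if_neg hj]
          ring
        · by_cases hjk : j = k
          · rw [hjk, hbb k hk]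
            simp only [eq_self_iff_true, if_true, if_neg hk]
            ring
          · rw [hdd j k hj hk hjk]
            simp only [if_neg hjk, if_neg hj, if_neg hk]
            ring
    have e1 : ∑ j : Fin M, ∑ k : Fin M, c j * c k * t j1 k1 = 0 := by
      have h : ∀ j : Fin M, ∑ k : Fin M, c j * c k * t j1 k1
          = c j * t j1 k1 * ∑ k : Fin M, c k := by
        intro j; rw [Finset.mul_sum]; exact Finset.sum_congr rfl fun k _ => by ring
      simp [h, hcsum]
    have e2 : ∑ j : Fin M, ∑ k : Fin M,
        (if j = k then c j * c k * (t j1 j1 - t j1 k1) else 0)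
        = (t j1 j1 - t j1 k1) * (1/(N:ℝ) - 1/M) := by
      have h : ∀ j : Fin M, (∑ k : Fin M,
          if j = k then c j * c k * (t j1 j1 - t j1 k1) else 0)
          = (c j)^2 * (t j1 j1 - t j1 k1) := by
        intro j
        rw [Finset.sum_ite_eq Finset.univ j (fun k => c j * c k * (t j1 j1 - t j1 k1)),
          if_pos (Finset.mem_univ j)]
        ring
      simp only [h]
      rw [← Finset.sum_mul, hQ]
      ring
    have e3 : ∑ j : Fin M, ∑ k : Fin M,
        (if j = i0 then c j * c k * (t i0 j1 - t j1 k1) else 0) = 0 := by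
      have h : ∀ j : Fin M, (∑ k : Fin M,
          if j = i0 then c j * c k * (t i0 j1 - t j1 k1) else 0)
          = (if j = i0 then c j * (t i0 j1 - t j1 k1) * ∑ k : Fin M, c k else 0) := by
        intro j
        split
        · rw [Finset.mul_sum]; exact Finset.sum_congr rfl fun k _ => by ring
        · simp
      simp [h, hcsum]
    have e4 : ∑ j : Fin M, ∑ k : Fin M,
        (if k = i0 then c j * c k * (t i0 j1 - t j1 k1) else 0) = 0 := by
      have h : ∀ j : Fin M, (∑ k : Fin M,
          if k = i0 then c j * c k * (t i0 j1 - t j1 k1) else 0)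
          = c j * c i0 * (t i0 j1 - t j1 k1) := by
        intro j
        rw [Finset.sum_ite_eq' Finset.univ i0 (fun k => c j * c k * (t i0 j1 - t j1 k1)),
          if_pos (Finset.mem_univ i0)]
      simp only [h]
      rw [← Finset.sum_mul, ← Finset.sum_mul, hcsum]
      ring
    have e5 : ∑ j : Fin M, ∑ k : Fin M,
        (if j = i0 then (if k = i0 then
            c j * c k * (t i0 i0 - t j1 j1 - 2 * t i0 j1 + 2 * t j1 k1) else 0) else 0)
        = (c i0)^2 * (t i0 i0 - t j1 j1 - 2 * t i0 j1 + 2 * t j1 k1) := by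
      have h : ∀ j : Fin M, (∑ k : Fin M,
          if j = i0 then (if k = i0 then
            c j * c k * (t i0 i0 - t j1 j1 - 2 * t i0 j1 + 2 * t j1 k1) else 0) else 0)
          = (if j = i0 then
              c j * c i0 * (t i0 i0 - t j1 j1 - 2 * t i0 j1 + 2 * t j1 k1) else 0) := by
        intro j
        split
        · rw [Finset.sum_ite_eq' Finset.univ i0
            (fun k => c j * c k * (t i0 i0 - t j1 j1 - 2 * t i0 j1 + 2 * t j1 k1)),
            if_pos (Finset.mem_univ i0)]
        · simp
      simp only [h]
      rw [Finset.sum_ite_eq' Finset.univ i0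
        (fun j => c j * c i0 * (t i0 i0 - t j1 j1 - 2 * t i0 j1 + 2 * t j1 k1)),
        if_pos (Finset.mem_univ i0)]
      ring
    have hval : ∑ j : Fin M, ∑ k : Fin M, c j * c k * t j k
        = (t j1 j1 - t j1 k1) * (1/(N:ℝ) - 1/M)
          + (c i0)^2 * (t i0 i0 - t j1 j1 - 2 * t i0 j1 + 2 * t j1 k1) := by
      calc ∑ j : Fin M, ∑ k : Fin M, c j * c k * t j k
          = ∑ j : Fin M, ∑ k : Fin M, (c j * c k * t j1 k1
            + (if j = k then c j * c k * (t j1 j1 - t j1 k1) else 0)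
            + (if j = i0 then c j * c k * (t i0 j1 - t j1 k1) else 0)
            + (if k = i0 then c j * c k * (t i0 j1 - t j1 k1) else 0)
            + (if j = i0 then (if k = i0 then
                c j * c k * (t i0 i0 - t j1 j1 - 2 * t i0 j1 + 2 * t j1 k1) else 0) else 0)) :=
            Finset.sum_congr rfl fun j _ => Finset.sum_congr rfl fun k _ => hprod j k
        _ = _ := by
            simp only [Finset.sum_add_distrib]
            rw [e1, e2, e3, e4, e5]
            ring
    rw [hval]
    -- final arithmetic
    have hq0 : (0:ℝ) ≤ (c i0)^2 := sq_nonneg _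
    have hqle : (c i0)^2 ≤ 1/(N:ℝ) - 1/(M:ℝ) := by
      rw [hci0]
      have hNinv1 : (N:ℝ)⁻¹ ≤ 1 := by
        rw [inv_le_one_iff₀]
        right
        exact_mod_cast hN
      have hinvle : (M:ℝ)⁻¹ ≤ (N:ℝ)⁻¹ := by
        apply inv_anti₀ hNR
        exact_mod_cast hNM
      have h1 : ((M:ℝ)⁻¹ - (N:ℝ)⁻¹)^2 = ((N:ℝ)⁻¹ - (M:ℝ)⁻¹)^2 := by ring
      rw [h1]
      have h2 : (0:ℝ) ≤ (N:ℝ)⁻¹ - (M:ℝ)⁻¹ := by linarith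
      have h3 : (N:ℝ)⁻¹ - (M:ℝ)⁻¹ ≤ 1 := by
        have : (0:ℝ) < (M:ℝ)⁻¹ := by positivity
        linarith
      calc ((N:ℝ)⁻¹ - (M:ℝ)⁻¹)^2 ≤ ((N:ℝ)⁻¹ - (M:ℝ)⁻¹) * 1 := by
            rw [sq]; exact mul_le_mul_of_nonneg_left h3 h2
        _ = 1/(N:ℝ) - 1/(M:ℝ) := by rw [mul_one, one_div, one_div]
    obtain ⟨hb1, hb2⟩ := abs_le.1 (htb j1 j1)
    obtain ⟨hb3, hb4⟩ := abs_le.1 (htb j1 k1)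
    obtain ⟨hb5, hb6⟩ := abs_le.1 (htb i0 i0)
    obtain ⟨hb7, hb8⟩ := abs_le.1 (htb i0 j1)
    have hstep1 : (t j1 j1 - t j1 k1) * (1/(N:ℝ) - 1/M)
        ≤ 2 * B^2 * (1/(N:ℝ) - 1/M) :=
      mul_le_mul_of_nonneg_right (by linarith) hP0
    have hstep2 : (c i0)^2 * (t i0 i0 - t j1 j1 - 2 * t i0 j1 + 2 * t j1 k1)
        ≤ (c i0)^2 * (6 * B^2) :=
      mul_le_mul_of_nonneg_left (by linarith) hq0
    have hstep3 : (c i0)^2 * (6 * B^2) ≤ (1/(N:ℝ) - 1/M) * (6 * B^2) :=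
      mul_le_mul_of_nonneg_right hqle (by positivity)
    calc (t j1 j1 - t j1 k1) * (1/(N:ℝ) - 1/M)
          + (c i0)^2 * (t i0 i0 - t j1 j1 - 2 * t i0 j1 + 2 * t j1 k1)
        ≤ 2 * B^2 * (1/(N:ℝ) - 1/M) + (1/(N:ℝ) - 1/M) * (6 * B^2) :=
          add_le_add hstep1 (hstep2.trans hstep3)
      _ = 8 * (1/(N:ℝ) - 1/M) * B^2 := by ring
  · -- degenerate case M ≤ 2 : crude pointwise bound suffices
    have hM2 : M ≤ 2 := by omega
    have hMle2 : (M:ℝ) ≤ 2 := by exact_mod_cast hM2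
    have hNMr : (N:ℝ) ≤ M := by exact_mod_cast hNM
    have hN1 : (1:ℝ) ≤ N := by exact_mod_cast hN
    have h1 : ∑ j : Fin M, ∑ k : Fin M, c j * c k * t j k
        ≤ ∑ j : Fin M, ∑ k : Fin M, |c j| * |c k| * B^2 := by
      refine Finset.sum_le_sum fun j _ => Finset.sum_le_sum fun k _ => ?_
      calc c j * c k * t j k ≤ |c j * c k * t j k| := le_abs_self _
        _ = |c j| * |c k| * |t j k| := by rw [abs_mul, abs_mul]
        _ ≤ |c j| * |c k| * B^2 :=
            mul_le_mul_of_nonneg_left (htb j k) (by positivity)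
    have hA : ∑ j : Fin M, |c j| = 2 * ((M:ℝ) - N) / M := by
      rw [hsplitsum (fun j => |c j|) ((N:ℝ)⁻¹ - (M:ℝ)⁻¹) ((M:ℝ)⁻¹)
        (fun j hj => by
          have hinvle : (M:ℝ)⁻¹ ≤ (N:ℝ)⁻¹ := by
            apply inv_anti₀ hNR
            exact_mod_cast hNM
          simp only [hc, if_pos hj]
          rw [abs_of_nonpos (by linarith)]
          ring)
        (fun j hj => by
          simp only [hc, if_neg hj]
          rw [sub_zero, abs_of_nonneg (by positivity)])]
      field_simp
      ring
    have h2 : ∑ j : Fin M, ∑ k : Fin M, |c j| * |c k| * B^2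
        = (2 * ((M:ℝ) - N) / M)^2 * B^2 := by
      have h : ∀ j : Fin M, ∑ k : Fin M, |c j| * |c k| * B^2
          = |c j| * ((∑ k : Fin M, |c k|) * B^2) := by
        intro j
        rw [Finset.sum_mul, Finset.mul_sum]
        exact Finset.sum_congr rfl fun k _ => by ring
      simp only [h]
      rw [← Finset.sum_mul, hA]
      ring
    have hkey : (2 * ((M:ℝ) - N) / M)^2 * B^2 ≤ 8 * (1/(N:ℝ) - 1/M) * B^2 := by
      apply mul_le_mul_of_nonneg_right _ (sq_nonneg B)
      have h8 : 8 * (1/(N:ℝ) - 1/M) = 8 * ((M:ℝ) - N) / (N * M) := by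
        field_simp
      rw [h8, div_pow, div_le_div_iff₀ (by positivity) (by positivity)]
      have hmn : ((M:ℝ) - N) * N ≤ 2 * M := by nlinarith
      have h4 : (0:ℝ) ≤ 4 * ((M:ℝ) - N) * M :=
        mul_nonneg (mul_nonneg (by norm_num) (by linarith)) hMR.le
      have h5 := mul_le_mul_of_nonneg_left hmn h4
      linarith only [h5]
    calc ∑ j : Fin M, ∑ k : Fin M, c j * c k * t j k
        ≤ (2 * ((M:ℝ) - N) / M)^2 * B^2 := h1.trans_eq h2
      _ ≤ 8 * (1/(N:ℝ) - 1/M) * B^2 := hkey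
end
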